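/- arXiv:math-ph/9903043 — 6 statements merged into one kernel-verified Lean document; each statement's English description precedes it below -/
import Mathlib

section
/- Let f(z) = ∑_{n≥0} a_n z^n be a power series with complex coefficients and radius of convergence at least R > 0, with b ≥ 1 a real number. If |f(z)| ≤ M·|1 - z/R|^{-b} for all complex z with |z| < R and some constant M, then in the case b > 1 there is a constant M' such that |a_n| ≤ M'·R^{-n}·n^{b-1} for all n ≥ 1, and in the case b = 1 there is a constant M' such that |a_n| ≤ M'·R^{-n}·log n for all n ≥ 2. -/
open Real MeasureTheory Metric intervalIntegral

lemma hasBall (a : ℕ → ℂ) (f : ℂ → ℂ) (R : ℝ) (hR : 0 < R)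
    (hf : ∀ z : ℂ, ‖z‖ < R → HasSum (fun n => a n * z ^ n) (f z)) :
    HasFPowerSeriesOnBall f (FormalMultilinearSeries.ofScalars ℂ a) 0 (ENNReal.ofReal R) := by
  set p := FormalMultilinearSeries.ofScalars ℂ a with hp
  have hnorm : ∀ m, ‖p m‖ = ‖a m‖ := fun m => FormalMultilinearSeries.ofScalars_norm ℂ a m
  have hrad : ENNReal.ofReal R ≤ p.radius := by
    refine ENNReal.le_of_forall_nnreal_lt (fun t ht => ?_)
    have htR : (t : ℝ) < R := by
      have h1 := (ENNReal.lt_ofReal_iff_toReal_lt (by simp)).1 ht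
      simpa using h1
    have hsum := (hf (t : ℝ) (by simpa [abs_of_nonneg t.coe_nonneg] using htR)).summable
    have h0 := hsum.tendsto_atTop_zero
    have h0' : Filter.Tendsto (fun m => ‖p m‖ * (t : ℝ) ^ m) Filter.atTop (nhds 0) := by
      have := h0.norm
      simpa [hnorm, norm_mul, norm_pow, abs_of_nonneg t.coe_nonneg] using this
    exact p.le_radius_of_tendsto h0'
  refine ⟨hrad, by simpa using hR, fun {y} hy => ?_⟩
  have hy' : ‖y‖ < R := by
    rw [Metric.eball_ofReal, mem_ball, dist_zero_right] at hy; exact hy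
  have heq : ∀ m, (p m fun _ => y) = a m * y ^ m := fun m => by
    simp [p, FormalMultilinearSeries.ofScalars_apply_eq, smul_eq_mul,
      FormalMultilinearSeries.coeff, FormalMultilinearSeries.ofScalars, mul_comm]
  have := hf y hy'
  simpa [heq] using this

lemma coeff_le (a : ℕ → ℂ) (f : ℂ → ℂ) (R : ℝ) (hR : 0 < R)
    (hf : ∀ z : ℂ, ‖z‖ < R → HasSum (fun n => a n * z ^ n) (f z))
    {r : ℝ} (hr0 : 0 < r) (hrR : r < R) (n : ℕ) :
    ‖a n‖ ≤ ((2 * π)⁻¹ * ∫ θ : ℝ in (0)..2 * π, ‖f (circleMap 0 r θ)‖) * r⁻¹ ^ n := by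
  set p := FormalMultilinearSeries.ofScalars ℂ a with hp
  have hnorm : ∀ m, ‖p m‖ = ‖a m‖ := fun m => FormalMultilinearSeries.ofScalars_norm ℂ a m
  have hball := hasBall a f R hR hf
  have hballR : Metric.eball (0:ℂ) (ENNReal.ofReal R) = Metric.ball 0 R :=
    Metric.emetric_ball
  have hdiff : DifferentiableOn ℂ f (closedBall (0:ℂ) r.toNNReal) := by
    apply hball.differentiableOn.mono
    rw [hballR]
    intro x hx
    simp only [mem_closedBall] at hx
    have : (r.toNNReal : ℝ) = r := Real.coe_toNNReal r hr0.le
    rw [this] at hx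
    exact mem_ball.2 (lt_of_le_of_lt hx hrR)
  have hrpos : 0 < r.toNNReal := by simpa using hr0
  have h2 := hdiff.hasFPowerSeriesOnBall hrpos
  have hpq : p = cauchyPowerSeries f 0 r.toNNReal :=
    hball.hasFPowerSeriesAt.eq_formalMultilinearSeries h2.hasFPowerSeriesAt
  have hcoe : (r.toNNReal : ℝ) = r := Real.coe_toNNReal r hr0.le
  calc ‖a n‖ = ‖cauchyPowerSeries f 0 r n‖ := by rw [← hnorm, hpq, hcoe]
    _ ≤ ((2 * π)⁻¹ * ∫ θ : ℝ in (0)..2 * π, ‖f (circleMap 0 r θ)‖) * |r|⁻¹ ^ n :=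
        norm_cauchyPowerSeries_le f 0 r n
    _ = _ := by rw [abs_of_pos hr0]

lemma circ_lower {ρ θ : ℝ} (hρ0 : 1/2 ≤ ρ) (hρ1 : ρ ≤ 1) (hθ0 : 0 ≤ θ) (hθ2 : θ ≤ 2*π) :
    max (1-ρ) (min θ (2*π-θ) / 4) ≤ ‖1 - (ρ:ℂ) * Complex.exp (θ * Complex.I)‖ := by
  set m := min θ (2*π - θ) with hm
  have hπ : 0 < π := Real.pi_pos
  have hπ4 : π ≤ 4 := by linarith [Real.pi_le_four]
  have hm0 : 0 ≤ m := le_min hθ0 (by linarith)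
  have hnn : (0:ℝ) ≤ ‖1 - (ρ:ℂ) * Complex.exp (θ * Complex.I)‖ := norm_nonneg _
  have hsq : ‖1 - (ρ:ℂ) * Complex.exp (θ * Complex.I)‖^2
      = (1-ρ)^2 + 2*ρ*(1 - Real.cos θ) := by
    rw [Complex.exp_mul_I]
    rw [show (1 - (ρ:ℂ)*(Complex.cos θ + Complex.sin θ * Complex.I))
        = Complex.ofReal (1 - ρ*Real.cos θ) + Complex.ofReal (-(ρ*Real.sin θ)) * Complex.I by
      push_cast [Complex.ofReal_cos, Complex.ofReal_sin]; ring]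
    rw [Complex.sq_norm, Complex.normSq_add_mul_I]
    linear_combination (ρ^2) * (Real.sin_sq_add_cos_sq θ)
  have hsin : m / π ≤ Real.sin (θ/2) := by
    rcases le_or_gt θ π with h | h
    · calc m/π ≤ θ/π := by gcongr; exact min_le_left _ _
        _ = 2/π * (θ/2) := by ring
        _ ≤ _ := Real.mul_le_sin (by linarith) (by linarith)
    · calc m/π ≤ (2*π-θ)/π := by gcongr; exact min_le_right _ _
        _ = 2/π * (π - θ/2) := by ring
        _ ≤ Real.sin (π - θ/2) := Real.mul_le_sin (by linarith) (by linarith)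
        _ = Real.sin (θ/2) := Real.sin_pi_sub _
  have hs0 : 0 ≤ Real.sin (θ/2) := le_trans (div_nonneg hm0 hπ.le) hsin
  have hsπ : m ≤ Real.sin (θ/2) * π := by rwa [div_le_iff₀ hπ] at hsin
  have hm16 : m^2 ≤ 16 * Real.sin (θ/2)^2 := by
    nlinarith [mul_self_le_mul_self hm0 hsπ, mul_self_le_mul_self hπ.le hπ4, sq_nonneg (Real.sin (θ/2))]
  have hcos : 1 - Real.cos θ = 2 * Real.sin (θ/2)^2 := by
    have h1 : Real.cos (2 * (θ/2)) = 1 - 2 * Real.sin (θ/2)^2  := by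
      rw [Real.cos_two_mul' (θ/2)]
      have := Real.sin_sq_add_cos_sq (θ/2); linarith
    rw [show 2 * (θ/2) = θ by ring] at h1
    linarith
  apply max_le
  · have h1 : (1-ρ)^2 ≤ ‖1 - (ρ:ℂ) * Complex.exp (θ * Complex.I)‖^2 := by
      rw [hsq]; nlinarith [Real.cos_le_one θ]
    nlinarith
  · have h1 : (m/4)^2 ≤ ‖1 - (ρ:ℂ) * Complex.exp (θ * Complex.I)‖^2 := by
      rw [hsq, hcos]
      nlinarith [sq_nonneg (1-ρ)]
    nlinarith

lemma key (a : ℕ → ℂ) (f : ℂ → ℂ) (R b M : ℝ) (hR : 0 < R) (hb : 1 ≤ b)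
    (hf : ∀ z : ℂ, ‖z‖ < R → HasSum (fun n => a n * z ^ n) (f z))
    (hbd : ∀ z : ℂ, ‖z‖ < R → ‖f z‖ ≤ M * ‖1 - z / (R : ℂ)‖ ^ (-b))
    (n : ℕ) (hn : 2 ≤ n) :
    ‖a n‖ ≤ (2 * π)⁻¹ * (2 * (M * ∫ θ : ℝ in (0)..2*π, (max ((n:ℝ)⁻¹) (θ/4)) ^ (-b)))
      * (8 * R ^ (-(n:ℝ))) := by
  have hπ : 0 < π := Real.pi_pos
  have hM : 0 ≤ M := by
    have h0 := hbd 0 (by simpa using hR)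
    simpa using (norm_nonneg (f 0)).trans h0
  set δ : ℝ := (n:ℝ)⁻¹ with hδdef
  have hn1 : (1:ℝ) ≤ (n:ℝ) - 1 := by
    have : (2:ℝ) ≤ (n:ℝ) := by exact_mod_cast hn
    linarith
  have hnR : (2:ℝ) ≤ (n:ℝ) := by exact_mod_cast hn
  have hδ0 : 0 < δ := by positivity
  have hδhalf : δ ≤ 1/2 := by
    rw [hδdef]
    rw [inv_le_comm₀ (by positivity) (by norm_num)]
    linarith
  set ρ : ℝ := 1 - δ with hρdef
  have hρhalf : 1/2 ≤ ρ := by simp only [hρdef]; linarith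
  have hρ1 : ρ < 1 := by simp only [hρdef]; linarith
  have hρ0 : 0 < ρ := by linarith
  set r : ℝ := R * ρ with hrdef
  have hr0 : 0 < r := by positivity
  have hrR : r < R := by
    calc r = R * ρ := hrdef
      _ < R * 1 := by exact mul_lt_mul_of_pos_left hρ1 hR
      _ = R := mul_one R
  -- continuity of f on the ball
  have hcontf : ContinuousOn f (ball (0:ℂ) R) := by
    have := (hasBall a f R hR hf).differentiableOn
    rw [Metric.emetric_ball] at this
    exact this.continuousOn
  have hmem : ∀ θ : ℝ, circleMap 0 r θ ∈ ball (0:ℂ) R := by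
    intro θ
    rw [mem_ball, dist_zero_right]
    rw [show ‖circleMap 0 r θ‖ = |r| from norm_circleMap_zero r θ]
    rw [abs_of_pos hr0]; exact hrR
  have hcont1 : Continuous fun θ : ℝ => ‖f (circleMap 0 r θ)‖ :=
    (hcontf.comp_continuous (continuous_circleMap 0 r) hmem).norm
  -- the bound function G
  set G : ℝ → ℝ := fun θ => M * ‖1 - circleMap 0 r θ / (R:ℂ)‖ ^ (-b) with hGdef
  have hGpos : ∀ θ : ℝ, 0 < ‖1 - circleMap 0 r θ / (R:ℂ)‖ := by
    intro θ
    have h1 : ‖circleMap 0 r θ / (R:ℂ)‖ = ρ := by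
      rw [norm_div]
      rw [show ‖circleMap 0 r θ‖ = |r| from norm_circleMap_zero r θ]
      rw [abs_of_pos hr0, Complex.norm_real, Real.norm_eq_abs, abs_of_pos hR]
      rw [hrdef]; field_simp
    have h2 := norm_sub_norm_le (1:ℂ) (circleMap 0 r θ / (R:ℂ))
    rw [norm_one, h1] at h2
    linarith
  have hcontG : Continuous G := by
    apply Continuous.mul continuous_const
    apply Continuous.rpow_const
    · exact (Continuous.sub continuous_const ((continuous_circleMap 0 r).div_const _)).norm
    · intro θ; exact Or.inl (hGpos θ).ne'
  -- step A
  have hIf : (∫ θ : ℝ in (0)..2*π, ‖f (circleMap 0 r θ)‖) ≤ ∫ θ : ℝ in (0)..2*π, G θ := by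
    apply intervalIntegral.integral_mono_on (by positivity)
      (hcont1.intervalIntegrable _ _) (hcontG.intervalIntegrable _ _)
    intro θ _
    have := hmem θ
    rw [mem_ball, dist_zero_right] at this
    exact hbd _ this
  -- the comparison function g
  set g : ℝ → ℝ := fun θ => (max δ (θ/4)) ^ (-b) with hgdef
  have hmaxpos : ∀ θ : ℝ, 0 < max δ (θ/4) := fun θ => lt_of_lt_of_le hδ0 (le_max_left _ _)
  have hgcont : Continuous g := by
    apply Continuous.rpow_const (continuous_const.max (continuous_id.div_const 4))
    intro θ; exact Or.inl (hmaxpos θ).ne'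
  have hg0 : ∀ θ : ℝ, 0 ≤ g θ := fun θ => Real.rpow_nonneg (hmaxpos θ).le _
  have hgcont2 : Continuous fun θ : ℝ => g (2*π - θ) :=
    hgcont.comp (continuous_const.sub continuous_id)
  -- step B : pointwise comparison
  have hIG : (∫ θ : ℝ in (0)..2*π, G θ) ≤ ∫ θ : ℝ in (0)..2*π, M * (g θ + g (2*π - θ)) := by
    apply intervalIntegral.integral_mono_on (by positivity)
      (hcontG.intervalIntegrable _ _)
      ((continuous_const.mul (hgcont.add hgcont2)).intervalIntegrable _ _)
    intro θ hθ
    have hcirc : (circleMap 0 r θ : ℂ) / (R:ℂ) = (ρ:ℂ) * Complex.exp (θ * Complex.I) := by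
      rw [circleMap_zero, hrdef]
      push_cast
      have hRne : (R:ℂ) ≠ 0 := by exact_mod_cast hR.ne'
      field_simp
    have hlow := circ_lower hρhalf hρ1.le hθ.1 hθ.2
    have h1ρ : 1 - ρ = δ := by rw [hρdef]; ring
    rw [h1ρ] at hlow
    have h3 : ‖1 - circleMap 0 r θ / (R:ℂ)‖ ^ (-b) ≤ (max δ (min θ (2*π-θ)/4)) ^ (-b) := by
      apply Real.rpow_le_rpow_of_nonpos (lt_of_lt_of_le hδ0 (le_max_left _ _))
      · rw [hcirc]; exact hlow
      · linarith
    have h4 : (max δ (min θ (2*π-θ)/4)) ^ (-b) ≤ g θ + g (2*π - θ) := by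
      rcases le_total θ π with h | h
      · have : min θ (2*π-θ) = θ := min_eq_left (by linarith)
        rw [this]
        exact le_add_of_le_of_nonneg le_rfl (hg0 _)
      · have : min θ (2*π-θ) = 2*π-θ := min_eq_right (by linarith)
        rw [this]
        exact le_add_of_nonneg_of_le (hg0 _) le_rfl
    exact mul_le_mul_of_nonneg_left (h3.trans h4) hM
  -- step C : evaluate the right-hand integral
  have hsym : (∫ θ : ℝ in (0)..2*π, g (2*π - θ)) = ∫ θ : ℝ in (0)..2*π, g θ := by
    have h := intervalIntegral.integral_comp_sub_left (a := (0:ℝ)) (b := 2*π) g (2*π)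
    simpa using h
  have hC : (∫ θ : ℝ in (0)..2*π, M * (g θ + g (2*π - θ)))
      = 2 * (M * ∫ θ : ℝ in (0)..2*π, g θ) := by
    rw [intervalIntegral.integral_const_mul]
    rw [intervalIntegral.integral_add (hgcont.intervalIntegrable _ _)
      (hgcont2.intervalIntegrable _ _)]
    rw [hsym]; ring
  -- step D : radius factor
  have hRn : (R:ℝ)⁻¹ ^ n = R ^ (-(n:ℝ)) := by
    rw [Real.rpow_neg hR.le, Real.rpow_natCast, inv_pow]
  have hρn : ρ⁻¹ ^ n ≤ 8 := by
    have hne : (n:ℝ) ≠ 0 := by positivity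
    have hne1 : (n:ℝ) - 1 ≠ 0 := by linarith
    have hinv : ρ⁻¹ = 1 + ((n:ℝ)-1)⁻¹ := by
      rw [hρdef, hδdef]
      field_simp
      ring
    have h1 : ρ⁻¹ ≤ Real.exp (((n:ℝ)-1)⁻¹) := by
      rw [hinv]
      linarith [Real.add_one_le_exp (((n:ℝ)-1)⁻¹)]
    have hexp2 : Real.exp 2 ≤ 8 := by
      rw [show (2:ℝ) = 1 + 1 by norm_num, Real.exp_add]
      nlinarith [Real.exp_one_lt_d9, Real.exp_pos 1]
    calc ρ⁻¹ ^ n ≤ (Real.exp (((n:ℝ)-1)⁻¹)) ^ n := pow_le_pow_left₀ (inv_nonneg.2 hρ0.le) h1 n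
      _ = Real.exp ((n:ℝ) * ((n:ℝ)-1)⁻¹) := by rw [← Real.exp_nat_mul]
      _ ≤ Real.exp 2 := by
          apply Real.exp_le_exp.2
          rw [← div_eq_mul_inv, div_le_iff₀ (by linarith)]
          linarith
      _ ≤ 8 := hexp2
  have hD : r⁻¹ ^ n ≤ 8 * R ^ (-(n:ℝ)) := by
    calc r⁻¹ ^ n = R⁻¹ ^ n * ρ⁻¹ ^ n := by rw [hrdef, mul_inv, mul_pow]
      _ ≤ R⁻¹ ^ n * 8 := mul_le_mul_of_nonneg_left hρn (by positivity)
      _ = 8 * R ^ (-(n:ℝ)) := by rw [hRn]; ring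
  -- combine
  have hIf0 : 0 ≤ ∫ θ : ℝ in (0)..2*π, ‖f (circleMap 0 r θ)‖ :=
    intervalIntegral.integral_nonneg (by positivity) (fun θ _ => norm_nonneg _)
  have hchain : (∫ θ : ℝ in (0)..2*π, ‖f (circleMap 0 r θ)‖)
      ≤ 2 * (M * ∫ θ : ℝ in (0)..2*π, g θ) := by
    rw [← hC]; exact hIf.trans hIG
  calc ‖a n‖ ≤ ((2 * π)⁻¹ * ∫ θ : ℝ in (0)..2*π, ‖f (circleMap 0 r θ)‖) * r⁻¹ ^ n :=
        coeff_le a f R hR hf hr0 hrR n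
    _ ≤ ((2 * π)⁻¹ * (2 * (M * ∫ θ : ℝ in (0)..2*π, g θ))) * (8 * R ^ (-(n:ℝ))) := by
        apply mul_le_mul
        · exact mul_le_mul_of_nonneg_left hchain (by positivity)
        · exact hD
        · positivity
        · have hJ0 : 0 ≤ ∫ θ : ℝ in (0)..2*π, g θ :=
            intervalIntegral.integral_nonneg (by positivity) (fun θ _ => hg0 θ)
          exact mul_nonneg (by positivity) (mul_nonneg (by norm_num) (mul_nonneg hM hJ0))
    _ = _ := by rw [hgdef]

lemma Jbound_gt {b : ℝ} (hb : 1 < b) {δ : ℝ} (hδ0 : 0 < δ) (hδ : δ ≤ 1/2) :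
    (∫ θ : ℝ in (0)..2*π, (max δ (θ/4)) ^ (-b)) ≤ 4 * (1 + (b-1)⁻¹) * δ ^ (1-b) := by
  have hπ : 0 < π := Real.pi_pos
  have hπ3 : 3 < π := Real.pi_gt_three
  have h4δ : 0 < 4*δ := by linarith
  have h4δ2π : 4*δ ≤ 2*π := by linarith
  have hmaxpos : ∀ θ : ℝ, 0 < max δ (θ/4) := fun θ => lt_of_lt_of_le hδ0 (le_max_left _ _)
  have hgcont : Continuous fun θ : ℝ => (max δ (θ/4)) ^ (-b) := by
    apply Continuous.rpow_const (continuous_const.max (continuous_id.div_const 4))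
    intro θ; exact Or.inl (hmaxpos θ).ne'
  have hsplit : (∫ θ : ℝ in (0)..2*π, (max δ (θ/4)) ^ (-b))
      = (∫ θ : ℝ in (0)..4*δ, (max δ (θ/4)) ^ (-b))
        + ∫ θ : ℝ in (4*δ)..2*π, (max δ (θ/4)) ^ (-b) :=
    (intervalIntegral.integral_add_adjacent_intervals
      (hgcont.intervalIntegrable _ _) (hgcont.intervalIntegrable _ _)).symm
  have hI1 : (∫ θ : ℝ in (0)..4*δ, (max δ (θ/4)) ^ (-b)) = 4 * δ ^ (1-b) := by
    rw [intervalIntegral.integral_congr (g := fun _ : ℝ => δ ^ (-b))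
      (fun θ hθ => by
        rw [Set.uIcc_of_le (by linarith)] at hθ
        have : θ/4 ≤ δ := by rcases hθ with ⟨h1, h2⟩; linarith
        simp [max_eq_left this])]
    rw [intervalIntegral.integral_const, smul_eq_mul]
    rw [show (1:ℝ) - b = -b + 1 by ring, Real.rpow_add hδ0, Real.rpow_one]
    ring
  have hI2 : (∫ θ : ℝ in (4*δ)..2*π, (max δ (θ/4)) ^ (-b)) ≤ 4 * δ ^ (1-b) * (b-1)⁻¹ := by
    have hcongr : (∫ θ : ℝ in (4*δ)..2*π, (max δ (θ/4)) ^ (-b))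
        = ∫ θ : ℝ in (4*δ)..2*π, (4:ℝ) ^ b * θ ^ (-b) := by
      apply intervalIntegral.integral_congr
      intro θ hθ
      rw [Set.uIcc_of_le (by linarith)] at hθ
      rcases hθ with ⟨h1, h2⟩
      have hθ0 : 0 < θ := by linarith
      have : δ ≤ θ/4 := by linarith
      show (max δ (θ/4)) ^ (-b) = 4 ^ b * θ ^ (-b)
      rw [max_eq_right this, Real.div_rpow hθ0.le (by norm_num), Real.rpow_neg (by norm_num : (0:ℝ) ≤ 4)]
      field_simp
    rw [hcongr, intervalIntegral.integral_const_mul]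
    have hval : (∫ θ : ℝ in (4*δ)..2*π, θ ^ (-b)) = ((2*π) ^ (-b+1) - (4*δ) ^ (-b+1))/(-b+1) := by
      apply integral_rpow
      right
      constructor
      · intro h; linarith
      · rw [Set.uIcc_of_le (by linarith)]
        intro ⟨h1, h2⟩; linarith
    rw [hval]
    have h2π0 : (0:ℝ) ≤ (2*π) ^ (-b+1) := Real.rpow_nonneg (by linarith) _
    have h4δpow : (4*δ:ℝ) ^ (-b+1) = 4 ^ (1-b) * δ ^ (1-b) := by
      rw [show -b+1 = 1-b by ring, Real.mul_rpow (by norm_num) hδ0.le]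
    have hb1 : 0 < b - 1 := by linarith
    rw [div_eq_mul_inv]
    have hstep : ((2*π) ^ (-b+1) - (4*δ) ^ (-b+1)) * (-b+1)⁻¹
        ≤ (4*δ) ^ (-b+1) * (b-1)⁻¹ := by
      have hneg : (-b+1)⁻¹ = -((b-1)⁻¹) := by
        rw [show -b+1 = -(b-1) by ring, inv_neg]
      rw [hneg]
      have h1 : 0 ≤ (4*δ:ℝ) ^ (-b+1) := Real.rpow_nonneg (by linarith) _
      have h2 : 0 < (b-1)⁻¹ := by positivity
      nlinarith
    calc (4:ℝ) ^ b * (((2*π) ^ (-b+1) - (4*δ) ^ (-b+1)) * (-b+1)⁻¹)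
        ≤ 4 ^ b * ((4*δ) ^ (-b+1) * (b-1)⁻¹) := by
          apply mul_le_mul_of_nonneg_left hstep (Real.rpow_nonneg (by norm_num) _)
      _ = 4 * δ ^ (1-b) * (b-1)⁻¹ := by
          rw [h4δpow, ← mul_assoc, ← mul_assoc, ← Real.rpow_add (by norm_num : (0:ℝ) < 4)]
          rw [show b + (1-b) = 1 by ring, Real.rpow_one]
    done
  rw [hsplit]
  have : 4 * (1 + (b-1)⁻¹) * δ ^ (1-b) = 4 * δ ^ (1-b) + 4 * δ ^ (1-b) * (b-1)⁻¹ := by ring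
  rw [this, hI1]
  linarith

lemma Jbound_eq {δ : ℝ} (hδ0 : 0 < δ) (hδ : δ ≤ 1/2) :
    (∫ θ : ℝ in (0)..2*π, (max δ (θ/4)) ^ (-(1:ℝ))) ≤ 4 + 4 * Real.log (2*π/(4*δ)) := by
  have hπ : 0 < π := Real.pi_pos
  have hπ3 : 3 < π := Real.pi_gt_three
  have h4δ : 0 < 4*δ := by linarith
  have h4δ2π : 4*δ ≤ 2*π := by linarith
  have hmaxpos : ∀ θ : ℝ, 0 < max δ (θ/4) := fun θ => lt_of_lt_of_le hδ0 (le_max_left _ _)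
  have hgcont : Continuous fun θ : ℝ => (max δ (θ/4)) ^ (-(1:ℝ)) := by
    apply Continuous.rpow_const (continuous_const.max (continuous_id.div_const 4))
    intro θ; exact Or.inl (hmaxpos θ).ne'
  have hsplit : (∫ θ : ℝ in (0)..2*π, (max δ (θ/4)) ^ (-(1:ℝ)))
      = (∫ θ : ℝ in (0)..4*δ, (max δ (θ/4)) ^ (-(1:ℝ)))
        + ∫ θ : ℝ in (4*δ)..2*π, (max δ (θ/4)) ^ (-(1:ℝ)) :=
    (intervalIntegral.integral_add_adjacent_intervals
      (hgcont.intervalIntegrable _ _) (hgcont.intervalIntegrable _ _)).symm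
  have hI1 : (∫ θ : ℝ in (0)..4*δ, (max δ (θ/4)) ^ (-(1:ℝ))) = 4 := by
    rw [intervalIntegral.integral_congr (g := fun _ : ℝ => δ ^ (-(1:ℝ)))
      (fun θ hθ => by
        rw [Set.uIcc_of_le (by linarith)] at hθ
        have : θ/4 ≤ δ := by rcases hθ with ⟨h1, h2⟩; linarith
        simp [max_eq_left this])]
    rw [intervalIntegral.integral_const, smul_eq_mul, Real.rpow_neg_one]
    field_simp
    ring
  have hI2 : (∫ θ : ℝ in (4*δ)..2*π, (max δ (θ/4)) ^ (-(1:ℝ)))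
      = 4 * Real.log (2*π/(4*δ)) := by
    have hcongr : (∫ θ : ℝ in (4*δ)..2*π, (max δ (θ/4)) ^ (-(1:ℝ)))
        = ∫ θ : ℝ in (4*δ)..2*π, (4:ℝ) * (1/θ) := by
      apply intervalIntegral.integral_congr
      intro θ hθ
      rw [Set.uIcc_of_le (by linarith)] at hθ
      rcases hθ with ⟨h1, h2⟩
      have hθ0 : 0 < θ := by linarith
      have : δ ≤ θ/4 := by linarith
      show (max δ (θ/4)) ^ (-(1:ℝ)) = 4 * (1/θ)
      rw [max_eq_right this, Real.rpow_neg_one]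
      field_simp
    rw [hcongr, intervalIntegral.integral_const_mul]
    rw [integral_one_div (by rw [Set.uIcc_of_le (by linarith)]; intro ⟨h1,h2⟩; linarith)]
  rw [hsplit, hI1, hI2]

/-- Coefficient bounds from a generating-function bound `|f(z)| ≤ M |1 - z/R|^{-b}`. -/
theorem stmt_0 (a : ℕ → ℂ) (f : ℂ → ℂ) (R b M : ℝ) (hR : 0 < R) (hb : 1 ≤ b)
    (hf : ∀ z : ℂ, ‖z‖ < R → HasSum (fun n => a n * z ^ n) (f z))
    (hbd : ∀ z : ℂ, ‖z‖ < R → ‖f z‖ ≤ M * ‖1 - z / (R : ℂ)‖ ^ (-b)) :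
    (1 < b → ∃ M' : ℝ, ∀ n : ℕ, 1 ≤ n →
      ‖a n‖ ≤ M' * R ^ (-(n : ℝ)) * (n : ℝ) ^ (b - 1)) ∧
    (b = 1 → ∃ M' : ℝ, ∀ n : ℕ, 2 ≤ n →
      ‖a n‖ ≤ M' * R ^ (-(n : ℝ)) * Real.log n) := by
  have hπ : 0 < π := Real.pi_pos
  have hM : 0 ≤ M := by
    have h0 := hbd 0 (by simpa using hR)
    simpa using (norm_nonneg (f 0)).trans h0
  constructor
  · -- case b > 1
    intro hb1
    refine ⟨max ((2*π)⁻¹ * (2 * (M * (4 * (1 + (b-1)⁻¹)))) * 8) (‖a 1‖ * R), fun n hn => ?_⟩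
    rcases eq_or_lt_of_le hn with h1 | h2
    · -- n = 1
      have hn1 : n = 1 := h1.symm
      subst hn1
      have hpow1 : ((1:ℕ):ℝ) ^ (b-1) = 1 := by
        rw [Nat.cast_one, Real.one_rpow]
      rw [hpow1, mul_one]
      have hRpow : R ^ (-((1:ℕ):ℝ)) = R⁻¹ := by
        rw [Nat.cast_one, Real.rpow_neg_one]
      rw [hRpow]
      calc ‖a 1‖ = (‖a 1‖ * R) * R⁻¹ := by field_simp
        _ ≤ _ := by
            apply mul_le_mul_of_nonneg_right (le_max_right _ _) (by positivity)
    · -- n ≥ 2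
      have hn2 : 2 ≤ n := h2
      have hnR : (2:ℝ) ≤ (n:ℝ) := by exact_mod_cast hn2
      have hnpos : (0:ℝ) < (n:ℝ) := by linarith
      have hδ0 : 0 < ((n:ℝ))⁻¹ := by positivity
      have hδhalf : ((n:ℝ))⁻¹ ≤ 1/2 := by
        rw [inv_le_comm₀ hnpos (by norm_num)]; linarith
      have hkey := key a f R b M hR hb hf hbd n hn2
      have hJ := Jbound_gt hb1 hδ0 hδhalf
      have hpow : (((n:ℝ))⁻¹) ^ (1-b) = (n:ℝ) ^ (b-1) := by
        rw [Real.inv_rpow hnpos.le, ← Real.rpow_neg hnpos.le, show -(1-b) = b-1 by ring]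
      rw [hpow] at hJ
      have hJ0 : 0 ≤ ∫ θ : ℝ in (0)..2*π, (max ((n:ℝ)⁻¹) (θ/4)) ^ (-b) :=
        intervalIntegral.integral_nonneg (by positivity)
          (fun θ _ => Real.rpow_nonneg (le_trans hδ0.le (le_max_left _ _)) _)
      calc ‖a n‖ ≤ (2 * π)⁻¹ * (2 * (M * ∫ θ : ℝ in (0)..2*π, (max ((n:ℝ)⁻¹) (θ/4)) ^ (-b)))
            * (8 * R ^ (-(n:ℝ))) := hkey
        _ ≤ (2 * π)⁻¹ * (2 * (M * (4 * (1 + (b-1)⁻¹) * (n:ℝ) ^ (b-1)))) * (8 * R ^ (-(n:ℝ))) := by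
            apply mul_le_mul_of_nonneg_right _ (by positivity)
            apply mul_le_mul_of_nonneg_left _ (by positivity)
            apply mul_le_mul_of_nonneg_left _ (by norm_num)
            exact mul_le_mul_of_nonneg_left hJ hM
        _ = ((2*π)⁻¹ * (2 * (M * (4 * (1 + (b-1)⁻¹)))) * 8) * R ^ (-(n:ℝ)) * (n:ℝ) ^ (b-1) := by
            ring
        _ ≤ _ := by
            apply mul_le_mul_of_nonneg_right _ (Real.rpow_nonneg hnpos.le _)
            apply mul_le_mul_of_nonneg_right (le_max_left _ _) (Real.rpow_nonneg hR.le _)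
  · -- case b = 1
    intro hbeq
    subst hbeq
    refine ⟨(2*π)⁻¹ * (2 * (M * 20)) * 8, fun n hn => ?_⟩
    have hnR : (2:ℝ) ≤ (n:ℝ) := by exact_mod_cast hn
    have hnpos : (0:ℝ) < (n:ℝ) := by linarith
    have hδ0 : 0 < ((n:ℝ))⁻¹ := by positivity
    have hδhalf : ((n:ℝ))⁻¹ ≤ 1/2 := by
      rw [inv_le_comm₀ hnpos (by norm_num)]; linarith
    have hkey := key a f R 1 M hR le_rfl hf hbd n hn
    have hJ := Jbound_eq hδ0 hδhalf
    have hlog2 : (1:ℝ)/2 < Real.log 2 := by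
      have := Real.log_two_gt_d9; linarith
    have hlogn : (1:ℝ)/2 ≤ Real.log n := by
      calc (1:ℝ)/2 ≤ Real.log 2 := hlog2.le
        _ ≤ Real.log n := Real.log_le_log (by norm_num) (by linarith)
    have hlog : Real.log (2*π/(4*((n:ℝ))⁻¹)) ≤ 1 + Real.log n := by
      have harg : 2*π/(4*((n:ℝ))⁻¹) = π * (n:ℝ) / 2 := by field_simp; ring
      rw [harg]
      calc Real.log (π * (n:ℝ)/2) ≤ Real.log (2 * (n:ℝ)) := by
            apply Real.log_le_log (by positivity)
            nlinarith [Real.pi_le_four]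
        _ = Real.log 2 + Real.log n := Real.log_mul (by norm_num) (by positivity)
        _ ≤ 1 + Real.log n := by
            have := Real.log_two_lt_d9; linarith
    have hJ20 : (∫ θ : ℝ in (0)..2*π, (max ((n:ℝ)⁻¹) (θ/4)) ^ (-(1:ℝ))) ≤ 20 * Real.log n := by
      calc (∫ θ : ℝ in (0)..2*π, (max ((n:ℝ)⁻¹) (θ/4)) ^ (-(1:ℝ)))
          ≤ 4 + 4 * Real.log (2*π/(4*((n:ℝ))⁻¹)) := hJ
        _ ≤ 4 + 4 * (1 + Real.log n) := by linarith
        _ = 8 + 4 * Real.log n := by ring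
        _ ≤ 20 * Real.log n := by linarith
    calc ‖a n‖ ≤ (2 * π)⁻¹ * (2 * (M * ∫ θ : ℝ in (0)..2*π, (max ((n:ℝ)⁻¹) (θ/4)) ^ (-(1:ℝ))))
          * (8 * R ^ (-(n:ℝ))) := hkey
      _ ≤ (2 * π)⁻¹ * (2 * (M * (20 * Real.log n))) * (8 * R ^ (-(n:ℝ))) := by
          apply mul_le_mul_of_nonneg_right _ (by positivity)
          apply mul_le_mul_of_nonneg_left _ (by positivity)
          apply mul_le_mul_of_nonneg_left _ (by norm_num)
          exact mul_le_mul_of_nonneg_left hJ20 hM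
      _ = ((2*π)⁻¹ * (2 * (M * 20)) * 8) * R ^ (-(n:ℝ)) * Real.log n := by ring
end

section
/- Let f(z) = ∑_{n≥0} a_n z^n be a power series, R > 0, and ε ∈ (0,1). Define the fractional derivative δ^ε f(z) = ∑_{n≥1} n^ε a_n z^n and its norm ‖δ^ε f(R)‖ = ∑_{n≥1} n^ε |a_n| R^n. If ‖δ^ε f(R)‖ < ∞, then for every complex z with |z| ≤ R one has |f(z) − f(R)| ≤ 2^{1−ε} · ‖δ^ε f(R)‖ · |1 − z/R|^ε. -/
/-!
Write `z ^ n - R ^ n = R ^ n ((z / R) ^ n - 1)`. On the closed unit ball `‖w ^ n - 1‖` is bounded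
both by `2` and by `n ‖w - 1‖`, hence by the weighted geometric mean `2 ^ (1 - ε) (n ‖w - 1‖) ^ ε`.
Multiplying by `‖a n‖ R ^ n` and summing over `n` gives the estimate.
-/

open Finset

theorem le_rpow_mul_rpow_of_le_of_le {m A B θ : ℝ} (hm : 0 ≤ m) (hA : m ≤ A) (hB : m ≤ B)
    (hθ₀ : 0 ≤ θ) (hθ₁ : θ ≤ 1) : m ≤ A ^ (1 - θ) * B ^ θ :=
  calc m = m ^ (1 - θ) * m ^ θ := by
        rw [← Real.rpow_add' hm (by norm_num), sub_add_cancel, Real.rpow_one]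
    _ ≤ A ^ (1 - θ) * B ^ θ :=
      mul_le_mul (Real.rpow_le_rpow hm hA (by linarith)) (Real.rpow_le_rpow hm hB hθ₀)
        (by positivity) (Real.rpow_nonneg (hm.trans hA) _)

section NormedCommRing

variable {𝕜 : Type*} [NormedCommRing 𝕜] [NormOneClass 𝕜]

theorem norm_pow_sub_pow_le_mul_norm_sub {x y : 𝕜} {r : ℝ} (hx : ‖x‖ ≤ r) (hy : ‖y‖ ≤ r)
    (n : ℕ) : ‖x ^ n - y ^ n‖ ≤ n * r ^ (n - 1) * ‖x - y‖ := by
  have hr : 0 ≤ r := (norm_nonneg x).trans hx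
  have hterm : ∀ i ∈ range n, ‖x ^ i * y ^ (n - 1 - i)‖ ≤ r ^ (n - 1) := fun i hi ↦
    calc ‖x ^ i * y ^ (n - 1 - i)‖ ≤ ‖x‖ ^ i * ‖y‖ ^ (n - 1 - i) :=
          (norm_mul_le _ _).trans (mul_le_mul (norm_pow_le _ _) (norm_pow_le _ _)
            (norm_nonneg _) (by positivity))
      _ ≤ r ^ i * r ^ (n - 1 - i) := by gcongr
      _ = r ^ (n - 1) := by rw [← pow_add]; congr 1; have := mem_range.mp hi; omega
  rw [← geom_sum₂_mul]
  refine (norm_mul_le _ _).trans (mul_le_mul_of_nonneg_right ?_ (norm_nonneg _))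
  simpa using (norm_sum_le _ _).trans (sum_le_sum hterm)

theorem norm_pow_sub_pow_le_two_mul {x y : 𝕜} {r : ℝ} (hx : ‖x‖ ≤ r) (hy : ‖y‖ ≤ r)
    (n : ℕ) : ‖x ^ n - y ^ n‖ ≤ 2 * r ^ n :=
  calc ‖x ^ n - y ^ n‖ ≤ ‖x‖ ^ n + ‖y‖ ^ n :=
        (norm_sub_le _ _).trans (add_le_add (norm_pow_le _ _) (norm_pow_le _ _))
    _ ≤ r ^ n + r ^ n := by gcongr
    _ = 2 * r ^ n := by ring

theorem norm_pow_sub_pow_le_rpow {x y : 𝕜} (hx : ‖x‖ ≤ 1) (hy : ‖y‖ ≤ 1) (n : ℕ) {ε : ℝ}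
    (hε₀ : 0 ≤ ε) (hε₁ : ε ≤ 1) :
    ‖x ^ n - y ^ n‖ ≤ 2 ^ (1 - ε) * (n : ℝ) ^ ε * ‖x - y‖ ^ ε := by
  have hlip := norm_pow_sub_pow_le_mul_norm_sub hx hy n
  have htwo := norm_pow_sub_pow_le_two_mul hx hy n
  simp only [one_pow, mul_one] at hlip htwo
  rw [mul_assoc, ← Real.mul_rpow n.cast_nonneg (norm_nonneg _)]
  exact le_rpow_mul_rpow_of_le_of_le (norm_nonneg _) htwo hlip hε₀ hε₁

end NormedCommRing

theorem summable_of_summable_natCast_rpow_mul {f : ℕ → ℝ} {ε : ℝ} (hf : ∀ n, 0 ≤ f n)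
    (hε : 0 ≤ ε) (h : Summable fun n : ℕ ↦ (n : ℝ) ^ ε * f n) : Summable f := by
  rw [← summable_nat_add_iff 1] at h ⊢
  refine h.of_nonneg_of_le (fun n ↦ hf _) fun n ↦ ?_
  exact le_mul_of_one_le_left (hf _) (Real.one_le_rpow (by simp) hε)

/-- Fractional derivative bound: `|f(z) - f(R)| ≤ 2^{1-ε} ‖δ^ε f(R)‖ |1 - z/R|^ε`. -/
theorem stmt_1 (a : ℕ → ℂ) (R ε : ℝ) (hR : 0 < R) (hε : ε ∈ Set.Ioo (0 : ℝ) 1)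
    (hsum : Summable fun n : ℕ => (n : ℝ) ^ ε * ‖a n‖ * R ^ n) :
    ∀ z : ℂ, ‖z‖ ≤ R →
      ‖(∑' n : ℕ, a n * z ^ n) - ∑' n : ℕ, a n * (R : ℂ) ^ n‖ ≤
        (2 : ℝ) ^ (1 - ε) * (∑' n : ℕ, (n : ℝ) ^ ε * ‖a n‖ * R ^ n) * ‖1 - z / (R : ℂ)‖ ^ ε := by
  intro z hz
  have hR₀ : (R : ℂ) ≠ 0 := by exact_mod_cast hR.ne'
  have hRC : ‖(R : ℂ)‖ = R := by simp [hR.le]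
  have habs : Summable fun n ↦ ‖a n‖ * R ^ n :=
    summable_of_summable_natCast_rpow_mul (fun n ↦ by positivity) hε.1.le
      (by simpa only [mul_assoc] using hsum)
  have hconv : ∀ w : ℂ, ‖w‖ ≤ R → Summable fun n ↦ a n * w ^ n := fun w hw ↦
    habs.of_norm_bounded fun n ↦ by rw [norm_mul, norm_pow]; gcongr
  have hzR : ‖z / R‖ ≤ 1 := by rw [norm_div, hRC, div_le_one hR]; exact hz
  have hterm : ∀ n : ℕ, ‖a n * z ^ n - a n * (R : ℂ) ^ n‖ ≤
      2 ^ (1 - ε) * ‖1 - z / R‖ ^ ε * ((n : ℝ) ^ ε * ‖a n‖ * R ^ n) := fun n ↦ by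
    have hfactor : a n * z ^ n - a n * (R : ℂ) ^ n = a n * R ^ n * ((z / R) ^ n - 1 ^ n) := by
      rw [one_pow, div_pow]; field_simp
    have hpow := norm_pow_sub_pow_le_rpow hzR (norm_one (α := ℂ)).le n hε.1.le hε.2.le
    rw [norm_sub_rev (z / R) 1] at hpow
    rw [hfactor, norm_mul, norm_mul, norm_pow, hRC]
    calc ‖a n‖ * R ^ n * ‖(z / R) ^ n - 1 ^ n‖
        ≤ ‖a n‖ * R ^ n * (2 ^ (1 - ε) * (n : ℝ) ^ ε * ‖1 - z / R‖ ^ ε) := by gcongr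
      _ = _ := by ring
  rw [← (hconv z hz).tsum_sub (hconv R hRC.le), mul_right_comm]
  exact tsum_of_norm_bounded (hsum.hasSum.mul_left _) hterm
end

section
/- Let f(z) = ∑_{n≥0} a_n z^n have radius of convergence R > 0, let ε ∈ (0,1), and suppose that ∑_{n≥1} n |a_n| z^{n-1} ≤ M₁ (1 − z/R)^{ε−1} for all real z ∈ [0,R). Then f extends continuously to the closed disk |z| ≤ R, and for every α ∈ (0, ε) there exists a constant M₂ (depending only on M₁, α, ε) such that |f(z) − f(R)| ≤ M₂ · R · |1 − z/R|^α for all complex z with |z| ≤ R. -/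
open Finset
set_option maxHeartbeats 1000000

lemma aux_bern {ε : ℝ} (hε : 0 < ε) (hε1 : ε < 1) {t : ℝ} (ht : 1 ≤ t) :
    ε * (t+1) ^ (-1-ε : ℝ) ≤ t ^ (-ε : ℝ) - (t+1) ^ (-ε : ℝ) := by
  have ht0 : (0:ℝ) < t := lt_of_lt_of_le one_pos ht
  have ht1 : (0:ℝ) < t + 1 := by linarith
  set x : ℝ := 1/(t+1) with hxdef
  have hx0 : 0 < x := by positivity
  have hx1 : x < 1 := by rw [hxdef, div_lt_one ht1]; linarith
  have h1 : (1-x)^(ε:ℝ) ≤ 1 - ε*x := by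
    have := rpow_one_add_le_one_add_mul_self (s := -x) (p := ε) (by linarith) hε.le hε1.le
    simpa [sub_eq_add_neg, mul_neg] using this
  have h2 : (1-x)^(ε:ℝ) * (1+ε*x) ≤ 1 := by
    have hpos : (0:ℝ) ≤ 1 + ε*x := by nlinarith
    have := mul_le_mul_of_nonneg_right h1 hpos
    nlinarith [sq_nonneg (ε*x)]
  have hsub : 1 - x = t/(t+1) := by rw [hxdef]; field_simp; ring
  have hPQ : (1-x)^(ε:ℝ) = t^(ε:ℝ) / (t+1)^(ε:ℝ) := by
    rw [hsub, Real.div_rpow ht0.le ht1.le]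
  have hA : t^(-ε:ℝ) = (t^(ε:ℝ))⁻¹ := by rw [Real.rpow_neg ht0.le]
  have hB : (t+1)^(-ε:ℝ) = ((t+1)^(ε:ℝ))⁻¹ := by rw [Real.rpow_neg ht1.le]
  have hC : (t+1)^(-1-ε:ℝ) = ((t+1)^(ε:ℝ))⁻¹ * (t+1)⁻¹ := by
    rw [show (-1-ε:ℝ) = (-ε) + (-1) by ring, Real.rpow_add ht1, Real.rpow_neg_one, hB]
  have hP : 0 < t^(ε:ℝ) := Real.rpow_pos_of_pos ht0 ε
  have hQ : 0 < (t+1)^(ε:ℝ) := Real.rpow_pos_of_pos ht1 ε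
  rw [hPQ, hxdef] at h2
  rw [hA, hB, hC]
  rw [div_mul_eq_mul_div, div_le_one hQ] at h2
  rw [le_sub_iff_add_le, ← sub_nonneg]
  have expand : (t^(ε:ℝ))⁻¹ - (ε * (((t+1)^(ε:ℝ))⁻¹ * (t+1)⁻¹) + ((t+1)^(ε:ℝ))⁻¹)
      = ((t+1)^(ε:ℝ) * (t+1) - t^(ε:ℝ) * (1 + ε * (1/(t+1))) * (t+1)) / (t^(ε:ℝ) * (t+1)^(ε:ℝ) * (t+1)) := by
    field_simp
    ring
  rw [expand]
  apply div_nonneg _ (by positivity)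
  nlinarith [h2, ht1]

lemma aux_tail {ε B : ℝ} (hε : 0 < ε) (hε1 : ε < 1) (hB : 0 ≤ B) {u : ℕ → ℝ} (hu : ∀ n, 0 ≤ u n)
    (hP : ∀ N : ℕ, 1 ≤ N → ∑ n ∈ range N, ((n:ℝ)+1) * u n ≤ B * (N:ℝ)^((1:ℝ)-ε)) :
    ∀ N M : ℕ, 1 ≤ N → ∑ n ∈ Ico N M, u n ≤ 2*B/ε * (N:ℝ)^(-ε:ℝ) := by
  intro N M hN
  have hNR : (1:ℝ) ≤ (N:ℝ) := by exact_mod_cast hN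
  have hN0 : (0:ℝ) < (N:ℝ) := by linarith
  have hNneg : (0:ℝ) < (N:ℝ)^(-ε:ℝ) := Real.rpow_pos_of_pos hN0 _
  rcases le_or_gt M N with h | h
  · rw [Ico_eq_empty (by omega), sum_empty]
    positivity
  have claim : ∀ (M : ℕ), N ≤ M → ∑ n ∈ Ico N M, u n ≤
      (∑ n ∈ range M, ((n:ℝ)+1) * u n) / ((M:ℝ)+1)
        + (B/ε) * ((N:ℝ)^(-ε:ℝ) - (M:ℝ)^(-ε:ℝ)) := by
    intro M hM
    induction M, hM using Nat.le_induction with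
    | base =>
      rw [Ico_self, sum_empty, sub_self, mul_zero, add_zero]
      exact div_nonneg (sum_nonneg fun n _ => mul_nonneg (by positivity) (hu n)) (by positivity)
    | succ M hM ih =>
      have hM1 : (1:ℝ) ≤ (M:ℝ) := by exact_mod_cast le_trans hN hM
      have hMpos : (0:ℝ) < (M:ℝ) + 1 := by linarith
      have hbern := aux_bern hε hε1 hM1
      have hq : ((M:ℝ)+1)^((1:ℝ)-ε) = ((M:ℝ)+1) * ((M:ℝ)+1)^(-ε:ℝ) := by
        rw [show (1:ℝ)-ε = 1 + (-ε) by ring, Real.rpow_add hMpos, Real.rpow_one]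
      have hr : ((M:ℝ)+1)^(-1-ε:ℝ) = ((M:ℝ)+1)^(-ε:ℝ) / ((M:ℝ)+1) := by
        rw [show (-1-ε:ℝ) = -ε + (-1) by ring, Real.rpow_add hMpos, Real.rpow_neg_one]
        ring
      have hPM1 := hP (M+1) (by omega)
      rw [sum_range_succ] at hPM1
      rw [sum_Ico_succ_top hM, sum_range_succ]
      push_cast at hPM1 ⊢
      set p : ℝ := ∑ n ∈ range M, ((n:ℝ)+1) * u n with hp
      set S : ℝ := ∑ n ∈ Ico N M, u n with hS
      set w : ℝ := u M with hw
      set m : ℝ := (M:ℝ) with hm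
      -- key chain
      have e1 : p/(m+1) + w = (p + (m+1)*w)/(m+1+1) + (p + (m+1)*w)/((m+1)*(m+1+1)) := by
        field_simp
      have hnum : 0 ≤ B * ((m+1)^(-ε:ℝ)) := by positivity
      have e2 : (p + (m+1)*w)/((m+1)*(m+1+1)) ≤ B * ((m+1)^(-ε:ℝ)) / (m+1+1) := by
        rw [hq] at hPM1
        rw [div_le_div_iff₀ (by positivity) (by positivity)]
        nlinarith [hPM1, hMpos]
      have e3 : B * ((m+1)^(-ε:ℝ)) / (m+1+1) ≤ B * ((m+1)^(-ε:ℝ)) / (m+1) := by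
        gcongr
        linarith
      have e4 : B * ((m+1)^(-ε:ℝ)) / (m+1) = (B/ε) * (ε * ((m+1)^(-1-ε:ℝ))) := by
        rw [hr]
        field_simp
      have e5 : (B/ε) * (ε * ((m+1)^(-1-ε:ℝ))) ≤ (B/ε) * (m^(-ε:ℝ) - (m+1)^(-ε:ℝ)) := by
        apply mul_le_mul_of_nonneg_left hbern (by positivity)
      linarith [ih]
  have key := claim M h.le
  have hM1 : (1:ℝ) ≤ (M:ℝ) := by exact_mod_cast le_trans hN h.le
  have hMpos : (0:ℝ) < (M:ℝ) := by linarith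
  have hPM := hP M (by omega)
  have hq : ((M:ℝ))^((1:ℝ)-ε) = (M:ℝ) * ((M:ℝ))^(-ε:ℝ) := by
    rw [show (1:ℝ)-ε = 1 + (-ε) by ring, Real.rpow_add hMpos, Real.rpow_one]
  have hMneg : (0:ℝ) < (M:ℝ)^(-ε:ℝ) := Real.rpow_pos_of_pos hMpos _
  -- M^{-ε} ≤ N^{-ε}
  have hmono : (M:ℝ)^(-ε:ℝ) ≤ (N:ℝ)^(-ε:ℝ) := by
    rw [Real.rpow_neg hMpos.le, Real.rpow_neg hN0.le]
    exact inv_anti₀ (Real.rpow_pos_of_pos hN0 ε)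
      (Real.rpow_le_rpow hN0.le (by exact_mod_cast h.le) hε.le)
  have h1 : (∑ n ∈ range M, ((n:ℝ)+1) * u n) / ((M:ℝ)+1) ≤ B * (N:ℝ)^(-ε:ℝ) := by
    calc (∑ n ∈ range M, ((n:ℝ)+1) * u n) / ((M:ℝ)+1)
        ≤ B * ((M:ℝ))^((1:ℝ)-ε) / ((M:ℝ)+1) := by gcongr
      _ ≤ B * ((M:ℝ))^((1:ℝ)-ε) / (M:ℝ) := by
          gcongr
          linarith
      _ = B * (M:ℝ)^(-ε:ℝ) := by rw [hq]; field_simp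
      _ ≤ B * (N:ℝ)^(-ε:ℝ) := mul_le_mul_of_nonneg_left hmono hB
  have h2 : (B/ε) * ((N:ℝ)^(-ε:ℝ) - (M:ℝ)^(-ε:ℝ)) ≤ (B/ε) * (N:ℝ)^(-ε:ℝ) := by
    apply mul_le_mul_of_nonneg_left _ (by positivity)
    linarith
  have hBe : B * (N:ℝ)^(-ε:ℝ) ≤ B/ε * (N:ℝ)^(-ε:ℝ) := by
    apply mul_le_mul_of_nonneg_right _ hNneg.le
    rw [le_div_iff₀ hε]
    nlinarith
  calc ∑ n ∈ Ico N M, u n ≤ _ := key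
    _ ≤ B * (N:ℝ)^(-ε:ℝ) + (B/ε) * (N:ℝ)^(-ε:ℝ) := by linarith
    _ ≤ B/ε * (N:ℝ)^(-ε:ℝ) + B/ε * (N:ℝ)^(-ε:ℝ) := by linarith
    _ = 2*B/ε * (N:ℝ)^(-ε:ℝ) := by ring

lemma aux_summable {ε B : ℝ} (hε : 0 < ε) (hε1 : ε < 1) (hB : 0 ≤ B) {u : ℕ → ℝ}
    (hu : ∀ n, 0 ≤ u n)
    (hP : ∀ N : ℕ, 1 ≤ N → ∑ n ∈ range N, ((n:ℝ)+1) * u n ≤ B * (N:ℝ)^((1:ℝ)-ε)) :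
    Summable u := by
  apply summable_of_sum_range_le (c := u 0 + 2*B/ε * (1:ℝ)^(-ε:ℝ)) hu
  intro n
  match n with
  | 0 =>
    simp only [range_zero, sum_empty]
    have := hu 0
    positivity
  | (m+1) =>
    rw [sum_range_succ']
    have he : ∑ i ∈ range m, u (i+1) = ∑ k ∈ Ico 1 (1+m), u k := by
      rw [Finset.sum_Ico_eq_sum_range]
      simp only [add_tsub_cancel_left]
      exact Finset.sum_congr rfl fun i _ => by rw [add_comm]
    rw [he]
    have := aux_tail hε hε1 hB hu hP 1 (1+m) le_rfl
    push_cast at this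
    linarith

lemma aux_tsum_tail {ε B : ℝ} (hε : 0 < ε) (hε1 : ε < 1) (hB : 0 ≤ B) {u : ℕ → ℝ}
    (hu : ∀ n, 0 ≤ u n)
    (hP : ∀ N : ℕ, 1 ≤ N → ∑ n ∈ range N, ((n:ℝ)+1) * u n ≤ B * (N:ℝ)^((1:ℝ)-ε))
    (N : ℕ) (hN : 1 ≤ N) :
    ∑' n, u (n + N) ≤ 2*B/ε * (N:ℝ)^(-ε:ℝ) := by
  apply Real.tsum_le_of_sum_range_le (fun n => hu _)
  intro n
  have he : ∑ i ∈ range n, u (i + N) = ∑ k ∈ Ico N (N + n), u k := by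
    rw [Finset.sum_Ico_eq_sum_range]
    simp only [add_tsub_cancel_left]
    exact Finset.sum_congr rfl fun i _ => by rw [add_comm]
  rw [he]
  exact aux_tail hε hε1 hB hu hP N (N+n) hN

/-- From a derivative bound on the positive axis to a Hölder-type bound on the closed disk. -/
theorem stmt_2 (ε M₁ α : ℝ) (hε : ε ∈ Set.Ioo (0 : ℝ) 1) (hα : 0 < α) (hαε : α < ε) :
    ∃ M₂ : ℝ, 0 < M₂ ∧
      ∀ (R : ℝ) (a : ℕ → ℂ), 0 < R →
        (∀ z : ℂ, ‖z‖ < R → Summable fun n : ℕ => a n * z ^ n) →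
        (∀ x : ℝ, 0 ≤ x → x < R →
          (Summable fun n : ℕ => (n + 1 : ℝ) * ‖a (n + 1)‖ * x ^ n) ∧
          (∑' n : ℕ, (n + 1 : ℝ) * ‖a (n + 1)‖ * x ^ n) ≤ M₁ * (1 - x / R) ^ (ε - 1)) →
        (∀ z : ℂ, ‖z‖ ≤ R → Summable fun n : ℕ => a n * z ^ n) ∧
        ∀ z : ℂ, ‖z‖ ≤ R →
          ‖(∑' n : ℕ, a n * z ^ n) - ∑' n : ℕ, a n * (R : ℂ) ^ n‖ ≤
            M₂ * R * ‖1 - z / (R : ℂ)‖ ^ α := by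
  obtain ⟨hε0, hε1⟩ := hε
  refine ⟨48/ε * (|M₁|+1), by positivity, ?_⟩
  intro R a hR hsum hbound
  have hR0 : (R:ℂ) ≠ 0 := Complex.ofReal_ne_zero.2 hR.ne'
  have hRnormC : ‖(R:ℂ)‖ = R := by
    rw [Complex.norm_real]; exact abs_of_pos hR
  -- M₁ is nonnegative
  have hM₁ : 0 ≤ M₁ := by
    have h0 := (hbound 0 le_rfl hR).2
    have h1 : (0:ℝ) ≤ ∑' n : ℕ, ((n:ℝ)+1) * ‖a (n+1)‖ * (0:ℝ)^n :=
      tsum_nonneg fun n => by positivity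
    simp only [zero_div, sub_zero, Real.one_rpow, mul_one] at h0
    exact le_trans h1 h0
  set u : ℕ → ℝ := fun n => ‖a (n+1)‖ * R^n with hu_def
  have hu : ∀ n, 0 ≤ u n := fun n => by rw [hu_def]; positivity
  -- Step A : partial sums bound
  have hP : ∀ N : ℕ, 1 ≤ N →
      ∑ n ∈ range N, ((n:ℝ)+1) * u n ≤ (4*M₁) * (N:ℝ)^((1:ℝ)-ε) := by
    intro N hN
    have hNR : (1:ℝ) ≤ (N:ℝ) := by exact_mod_cast hN
    have h2N : (0:ℝ) < 2*(N:ℝ) := by linarith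
    have hinv : 1/(2*(N:ℝ)) ≤ 1/2 := by
      apply div_le_div_of_nonneg_left one_pos.le (by norm_num)
      linarith
    set s : ℝ := 1 - 1/(2*(N:ℝ)) with hs_def
    have hs0 : 0 < s := by rw [hs_def]; linarith
    have hs1 : s < 1 := by
      rw [hs_def]
      have : 0 < 1/(2*(N:ℝ)) := by positivity
      linarith
    set x : ℝ := s * R with hx_def
    have hx0 : (0:ℝ) ≤ x := by positivity
    have hxR : x < R := by
      rw [hx_def]
      exact mul_lt_of_lt_one_left hR hs1
    obtain ⟨hsummable, hle⟩ := hbound x hx0 hxR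
    have hxdivR : x / R = s := by
      rw [hx_def, mul_div_assoc, div_self hR.ne', mul_one]
    rw [hxdivR, sub_sub_cancel] at hle
    -- termwise comparison on range N
    have hterm : ∀ n ∈ range N, ((n:ℝ)+1) * u n ≤ 2 * (((n:ℝ)+1) * ‖a (n+1)‖ * x^n) := by
      intro n hn
      have hnN : (n:ℝ) ≤ (N:ℝ) := by exact_mod_cast (mem_range.1 hn).le
      have hsn : (1:ℝ)/2 ≤ s^n := by
        have hb := one_add_mul_le_pow (a := -(1/(2*(N:ℝ)))) (by linarith) n
        have he : (1 + -(1/(2*(N:ℝ)))) = s := by rw [hs_def]; ring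
        rw [he] at hb
        have hfrac : (n:ℝ) * (1/(2*(N:ℝ))) ≤ 1/2 := by
          rw [mul_one_div, div_le_div_iff₀ h2N (by norm_num : (0:ℝ) < 2)]
          nlinarith
        linarith [hb, hfrac]
      have base : (0:ℝ) ≤ ((n:ℝ)+1) * ‖a (n+1)‖ * R^n := by positivity
      calc ((n:ℝ)+1) * u n = (((n:ℝ)+1) * ‖a (n+1)‖ * R^n) * 1 := by rw [hu_def]; ring
        _ ≤ (((n:ℝ)+1) * ‖a (n+1)‖ * R^n) * (2 * s^n) :=
            mul_le_mul_of_nonneg_left (by linarith) base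
        _ = 2 * (((n:ℝ)+1) * ‖a (n+1)‖ * x^n) := by rw [hx_def, mul_pow]; ring
    have hsumle : ∑ n ∈ range N, ((n:ℝ)+1) * ‖a (n+1)‖ * x^n
        ≤ ∑' n : ℕ, ((n:ℝ)+1) * ‖a (n+1)‖ * x^n := by
      apply Summable.sum_le_tsum (range N) (fun i _ => by positivity) hsummable
    have hrpow : (1/(2*(N:ℝ)))^(ε-1:ℝ) = (2*(N:ℝ))^((1:ℝ)-ε) := by
      rw [one_div, Real.inv_rpow h2N.le, ← Real.rpow_neg h2N.le, neg_sub]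
    have hsplit2 : (2*(N:ℝ))^((1:ℝ)-ε) ≤ 2 * (N:ℝ)^((1:ℝ)-ε) := by
      rw [Real.mul_rpow (by norm_num) (by positivity)]
      have h2e : (2:ℝ)^((1:ℝ)-ε) ≤ 2 := by
        calc (2:ℝ)^((1:ℝ)-ε) ≤ (2:ℝ)^(1:ℝ) :=
              Real.rpow_le_rpow_of_exponent_le one_le_two (by linarith)
          _ = 2 := Real.rpow_one 2
      exact mul_le_mul_of_nonneg_right h2e (by positivity)
    calc ∑ n ∈ range N, ((n:ℝ)+1) * u n
        ≤ ∑ n ∈ range N, 2 * (((n:ℝ)+1) * ‖a (n+1)‖ * x^n) := sum_le_sum hterm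
      _ = 2 * ∑ n ∈ range N, ((n:ℝ)+1) * ‖a (n+1)‖ * x^n := by rw [mul_sum]
      _ ≤ 2 * ∑' n : ℕ, ((n:ℝ)+1) * ‖a (n+1)‖ * x^n := by linarith
      _ ≤ 2 * (M₁ * (1/(2*(N:ℝ)))^(ε-1:ℝ)) := by linarith
      _ = 2 * M₁ * (2*(N:ℝ))^((1:ℝ)-ε) := by rw [hrpow]; ring
      _ ≤ 2 * M₁ * (2 * (N:ℝ)^((1:ℝ)-ε)) :=
            mul_le_mul_of_nonneg_left hsplit2 (by linarith)
      _ = (4*M₁) * (N:ℝ)^((1:ℝ)-ε) := by ring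

  have hB4 : (0:ℝ) ≤ 4*M₁ := by linarith
  have hUsum : Summable u := aux_summable hε0 hε1 hB4 hu hP
  have hTail := aux_tsum_tail hε0 hε1 hB4 hu hP
  have hg : Summable (fun n : ℕ => ‖a n‖ * R^n) := by
    rw [← summable_nat_add_iff 1]
    have he : (fun n : ℕ => ‖a (n+1)‖ * R^(n+1)) = fun n => R * u n := by
      funext n
      rw [hu_def, pow_succ]
      ring
    exact he ▸ (hUsum.mul_left R)
  have part1 : ∀ z : ℂ, ‖z‖ ≤ R → Summable fun n : ℕ => a n * z^n := by
    intro z hz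
    apply Summable.of_norm
    apply Summable.of_nonneg_of_le (fun n => norm_nonneg _) _ hg
    intro n
    rw [norm_mul, norm_pow]
    exact mul_le_mul_of_nonneg_left (pow_le_pow_left₀ (norm_nonneg z) hz n) (norm_nonneg _)
  refine ⟨part1, ?_⟩
  intro z hz
  have hsz := part1 z hz
  have hsR := part1 (R:ℂ) (by rw [hRnormC])
  rcases eq_or_ne z (R:ℂ) with hzR | hzR
  · rw [hzR, sub_self, norm_zero, div_self hR0, sub_self, norm_zero,
      Real.zero_rpow hα.ne', mul_zero]
  set δ := ‖1 - z/(R:ℂ)‖ with hδ_def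
  have hδ0 : 0 < δ := by
    rw [hδ_def, norm_pos_iff]
    intro h
    exact hzR ((div_eq_one_iff_eq hR0).1 (sub_eq_zero.1 h).symm)
  have hδ2 : δ ≤ 2 := by
    rw [hδ_def]
    calc ‖1 - z/(R:ℂ)‖ ≤ ‖(1:ℂ)‖ + ‖z/(R:ℂ)‖ := norm_sub_le _ _
      _ ≤ 1 + 1 := by
          rw [norm_one, norm_div, hRnormC]
          have : ‖z‖/R ≤ 1 := by rw [div_le_one hR]; exact hz
          linarith
      _ = 2 := by norm_num
  have hd : ‖z - (R:ℂ)‖ = R * δ := by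
    have he : z - (R:ℂ) = -(1 - z/(R:ℂ)) * (R:ℂ) := by field_simp; ring
    rw [he, norm_mul, norm_neg, hRnormC, ← hδ_def, mul_comm]
  set N := ⌈1/δ⌉₊ with hN_def
  have hN1 : 1 ≤ N := Nat.one_le_ceil_iff.2 (by positivity)
  have hNR1 : (1:ℝ) ≤ (N:ℝ) := by exact_mod_cast hN1
  have hNpos : (0:ℝ) < (N:ℝ) := by linarith
  have hNlow : 1/δ ≤ (N:ℝ) := Nat.le_ceil _
  have hNup : (N:ℝ) ≤ 2/δ := by
    rcases le_or_gt 1 δ with h | h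
    · have hceil : N ≤ 1 := by
        rw [hN_def]
        apply Nat.ceil_le.2
        rw [Nat.cast_one, div_le_one hδ0]
        exact h
      have h1 : (N:ℝ) ≤ 1 := by exact_mod_cast hceil
      have h2 : (1:ℝ) ≤ 2/δ := by rw [le_div_iff₀ hδ0]; linarith
      linarith
    · have h1δ : (1:ℝ) ≤ 1/δ := by rw [le_div_iff₀ hδ0]; linarith
      have hc : (N:ℝ) < 1/δ + 1 := by
        rw [hN_def]
        exact Nat.ceil_lt_add_one (by positivity)
      have h2 : 1/δ + 1 ≤ 2/δ := by
        have : (2:ℝ)/δ = 1/δ + 1/δ := by ring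
        linarith [this]
      linarith
  have hdiff : (∑' n : ℕ, a n * z^n) - ∑' n : ℕ, a n * (R:ℂ)^n
      = ∑' n : ℕ, (a n * z^n - a n * (R:ℂ)^n) := (Summable.tsum_sub hsz hsR).symm
  have ht_le : ∀ n : ℕ, ‖a n * z^n - a n * (R:ℂ)^n‖ ≤ 2 * (‖a n‖ * R^n) := by
    intro n
    have h1 : ‖a n * z^n‖ ≤ ‖a n‖ * R^n := by
      rw [norm_mul, norm_pow]
      exact mul_le_mul_of_nonneg_left (pow_le_pow_left₀ (norm_nonneg z) hz n) (norm_nonneg _)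
    have h2 : ‖a n * (R:ℂ)^n‖ = ‖a n‖ * R^n := by rw [norm_mul, norm_pow, hRnormC]
    calc ‖a n * z^n - a n * (R:ℂ)^n‖ ≤ ‖a n * z^n‖ + ‖a n * (R:ℂ)^n‖ := norm_sub_le _ _
      _ ≤ 2*(‖a n‖ * R^n) := by rw [h2]; linarith
  have htsummable : Summable (fun n : ℕ => ‖a n * z^n - a n * (R:ℂ)^n‖) :=
    Summable.of_nonneg_of_le (fun n => norm_nonneg _) ht_le (hg.mul_left 2)
  have hnorm := norm_tsum_le_tsum_norm htsummable
  have hsplit := (Summable.sum_add_tsum_nat_add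
    (f := fun n : ℕ => ‖a n * z^n - a n * (R:ℂ)^n‖) (N+1) htsummable).symm
  have hzpow : ∀ m : ℕ, ‖z^(m+1) - (R:ℂ)^(m+1)‖ ≤ ((m:ℝ)+1) * R^m * (R*δ) := by
    intro m
    have hgeom := geom_sum₂_mul z (R:ℂ) (m+1)
    rw [← hgeom, norm_mul]
    have hbig : ‖∑ i ∈ range (m+1), z^i * (R:ℂ)^(m+1-1-i)‖ ≤ ((m:ℝ)+1) * R^m := by
      calc ‖∑ i ∈ range (m+1), z^i * (R:ℂ)^(m+1-1-i)‖
          ≤ ∑ i ∈ range (m+1), ‖z^i * (R:ℂ)^(m+1-1-i)‖ := norm_sum_le _ _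
        _ ≤ ∑ _i ∈ range (m+1), R^m := by
            apply sum_le_sum
            intro i hi
            have hi' : i ≤ m := by have := mem_range.1 hi; omega
            rw [norm_mul, norm_pow, norm_pow, hRnormC]
            have e : m+1-1-i = m-i := by omega
            rw [e]
            calc ‖z‖^i * R^(m-i) ≤ R^i * R^(m-i) :=
                  mul_le_mul_of_nonneg_right (pow_le_pow_left₀ (norm_nonneg z) hz i)
                    (by positivity)
              _ = R^m := by rw [← pow_add]; congr 1; omega
        _ = ((m:ℝ)+1) * R^m := by
            rw [sum_const, card_range, nsmul_eq_mul]
            push_cast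
            ring
    calc ‖∑ i ∈ range (m+1), z^i * (R:ℂ)^(m+1-1-i)‖ * ‖z - (R:ℂ)‖
        ≤ (((m:ℝ)+1) * R^m) * ‖z - (R:ℂ)‖ := mul_le_mul_of_nonneg_right hbig (norm_nonneg _)
      _ = ((m:ℝ)+1) * R^m * (R*δ) := by rw [hd]
  have hhead : ∑ n ∈ range (N+1), ‖a n * z^n - a n * (R:ℂ)^n‖
      ≤ R*δ * ((4*M₁) * (N:ℝ)^((1:ℝ)-ε)) := by
    rw [sum_range_succ']
    have ht0 : ‖a 0 * z^0 - a 0 * (R:ℂ)^0‖ = 0 := by simp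
    rw [ht0, add_zero]
    have hterm : ∀ i ∈ range N, ‖a (i+1) * z^(i+1) - a (i+1) * (R:ℂ)^(i+1)‖
        ≤ (R*δ) * (((i:ℝ)+1) * u i) := by
      intro i _
      have he : a (i+1) * z^(i+1) - a (i+1) * (R:ℂ)^(i+1)
          = a (i+1) * (z^(i+1) - (R:ℂ)^(i+1)) := by ring
      rw [he, norm_mul]
      calc ‖a (i+1)‖ * ‖z^(i+1) - (R:ℂ)^(i+1)‖
          ≤ ‖a (i+1)‖ * (((i:ℝ)+1) * R^i * (R*δ)) :=
            mul_le_mul_of_nonneg_left (hzpow i) (norm_nonneg _)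
        _ = (R*δ) * (((i:ℝ)+1) * u i) := by rw [hu_def]; ring
    calc ∑ i ∈ range N, ‖a (i+1) * z^(i+1) - a (i+1) * (R:ℂ)^(i+1)‖
        ≤ ∑ i ∈ range N, (R*δ) * (((i:ℝ)+1) * u i) := sum_le_sum hterm
      _ = (R*δ) * ∑ i ∈ range N, ((i:ℝ)+1) * u i := by rw [mul_sum]
      _ ≤ R*δ * ((4*M₁) * (N:ℝ)^((1:ℝ)-ε)) :=
            mul_le_mul_of_nonneg_left (hP N hN1) (by positivity)
  have hshift : Summable (fun n : ℕ => u (n + N)) := (summable_nat_add_iff N).2 hUsum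
  have htail : ∑' n : ℕ, ‖a (n+(N+1)) * z^(n+(N+1)) - a (n+(N+1)) * (R:ℂ)^(n+(N+1))‖
      ≤ 2*R * (2*(4*M₁)/ε * (N:ℝ)^(-ε:ℝ)) := by
    have hb : ∀ n : ℕ, ‖a (n+(N+1)) * z^(n+(N+1)) - a (n+(N+1)) * (R:ℂ)^(n+(N+1))‖
        ≤ 2*R * u (n + N) := by
      intro n
      have h1 := ht_le (n+(N+1))
      have he : 2 * (‖a (n+(N+1))‖ * R^(n+(N+1))) = 2*R * u (n+N) := by
        rw [hu_def]
        have e2 : n+(N+1) = (n+N)+1 := by omega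
        rw [e2, pow_succ]
        ring
      rw [he] at h1
      exact h1
    calc ∑' n : ℕ, ‖a (n+(N+1)) * z^(n+(N+1)) - a (n+(N+1)) * (R:ℂ)^(n+(N+1))‖
        ≤ ∑' n : ℕ, 2*R * u (n+N) :=
          Summable.tsum_le_tsum hb ((summable_nat_add_iff (N+1)).2 htsummable) (hshift.mul_left (2*R))
      _ = 2*R * ∑' n : ℕ, u (n+N) := tsum_mul_left
      _ ≤ 2*R * (2*(4*M₁)/ε * (N:ℝ)^(-ε:ℝ)) :=
          mul_le_mul_of_nonneg_left (hTail N hN1) (by positivity)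
  have hup : δ * (N:ℝ)^((1:ℝ)-ε) ≤ 2 * δ^(ε:ℝ) := by
    have h1 : (N:ℝ)^((1:ℝ)-ε) ≤ (2/δ)^((1:ℝ)-ε) :=
      Real.rpow_le_rpow hNpos.le hNup (by linarith)
    have h2 : ((2:ℝ)/δ)^((1:ℝ)-ε) = 2^((1:ℝ)-ε) / δ^((1:ℝ)-ε) :=
      Real.div_rpow (by norm_num) hδ0.le _
    have h3 : (2:ℝ)^((1:ℝ)-ε) ≤ 2 := by
      calc (2:ℝ)^((1:ℝ)-ε) ≤ (2:ℝ)^(1:ℝ) :=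
            Real.rpow_le_rpow_of_exponent_le one_le_two (by linarith)
        _ = 2 := Real.rpow_one 2
    have h4 : δ / δ^((1:ℝ)-ε) = δ^(ε:ℝ) := by
      have h5 : δ^(ε:ℝ) = δ^(1:ℝ) / δ^((1:ℝ)-ε) := by
        rw [← Real.rpow_sub hδ0]
        norm_num
      rw [h5, Real.rpow_one]
    have h6 : 0 ≤ δ / δ^((1:ℝ)-ε) := by rw [h4]; positivity
    calc δ * (N:ℝ)^((1:ℝ)-ε) ≤ δ * (2^((1:ℝ)-ε)/δ^((1:ℝ)-ε)) := by
          apply mul_le_mul_of_nonneg_left _ hδ0.le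
          rw [← h2]
          exact h1
      _ = 2^((1:ℝ)-ε) * (δ / δ^((1:ℝ)-ε)) := by ring
      _ ≤ 2 * (δ / δ^((1:ℝ)-ε)) := mul_le_mul_of_nonneg_right h3 h6
      _ = 2 * δ^(ε:ℝ) := by rw [h4]
  have hdn : (N:ℝ)^(-ε:ℝ) ≤ δ^(ε:ℝ) := by
    have h1 : ((1:ℝ)/δ)^(ε:ℝ) ≤ (N:ℝ)^(ε:ℝ) := Real.rpow_le_rpow (by positivity) hNlow hε0.le
    have h2 : ((1:ℝ)/δ)^(ε:ℝ) = (δ^(ε:ℝ))⁻¹ := by rw [one_div, Real.inv_rpow hδ0.le]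
    rw [Real.rpow_neg hNpos.le]
    rw [h2] at h1
    calc ((N:ℝ)^(ε:ℝ))⁻¹ ≤ ((δ^(ε:ℝ))⁻¹)⁻¹ := inv_anti₀ (by positivity) h1
      _ = δ^(ε:ℝ) := inv_inv _
  have hδε : δ^(ε:ℝ) ≤ 2 * δ^(α:ℝ) := by
    have h1 : δ^(ε:ℝ) = δ^(α:ℝ) * δ^(ε-α:ℝ) := by
      rw [← Real.rpow_add hδ0]
      ring_nf
    have h2 : δ^(ε-α:ℝ) ≤ 2^(ε-α:ℝ) := Real.rpow_le_rpow hδ0.le hδ2 (by linarith)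
    have h3 : (2:ℝ)^(ε-α:ℝ) ≤ 2 := by
      calc (2:ℝ)^(ε-α:ℝ) ≤ (2:ℝ)^(1:ℝ) :=
            Real.rpow_le_rpow_of_exponent_le one_le_two (by linarith)
        _ = 2 := Real.rpow_one 2
    calc δ^(ε:ℝ) = δ^(α:ℝ) * δ^(ε-α:ℝ) := h1
      _ ≤ δ^(α:ℝ) * 2 := mul_le_mul_of_nonneg_left (h2.trans h3) (by positivity)
      _ = 2 * δ^(α:ℝ) := by ring
  have hMR : (0:ℝ) ≤ M₁ * R := mul_nonneg hM₁ hR.le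
  have hc1 : (0:ℝ) ≤ 4*M₁*R := by linarith
  have hc2 : (0:ℝ) ≤ 16*M₁*R/ε := by positivity
  calc ‖(∑' n : ℕ, a n * z^n) - ∑' n : ℕ, a n * (R:ℂ)^n‖
      = ‖∑' n : ℕ, (a n * z^n - a n * (R:ℂ)^n)‖ := by rw [hdiff]
    _ ≤ ∑' n : ℕ, ‖a n * z^n - a n * (R:ℂ)^n‖ := hnorm
    _ = ∑ n ∈ range (N+1), ‖a n * z^n - a n * (R:ℂ)^n‖
        + ∑' n : ℕ, ‖a (n+(N+1)) * z^(n+(N+1)) - a (n+(N+1)) * (R:ℂ)^(n+(N+1))‖ := hsplit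
    _ ≤ R*δ * ((4*M₁) * (N:ℝ)^((1:ℝ)-ε)) + 2*R * (2*(4*M₁)/ε * (N:ℝ)^(-ε:ℝ)) :=
        add_le_add hhead htail
    _ ≤ (4*M₁*R) * (2*δ^(ε:ℝ)) + (16*M₁*R/ε) * δ^(ε:ℝ) := by
        apply add_le_add
        · calc R*δ * ((4*M₁) * (N:ℝ)^((1:ℝ)-ε))
              = (4*M₁*R) * (δ * (N:ℝ)^((1:ℝ)-ε)) := by ring
            _ ≤ (4*M₁*R) * (2*δ^(ε:ℝ)) := mul_le_mul_of_nonneg_left hup hc1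
        · calc 2*R * (2*(4*M₁)/ε * (N:ℝ)^(-ε:ℝ))
              = (16*M₁*R/ε) * (N:ℝ)^(-ε:ℝ) := by ring
            _ ≤ (16*M₁*R/ε) * δ^(ε:ℝ) := mul_le_mul_of_nonneg_left hdn hc2
    _ ≤ (24/ε * M₁ * R) * δ^(ε:ℝ) := by
        have h8 : (8:ℝ) ≤ 8/ε := by
          rw [le_div_iff₀ hε0]
          nlinarith
        have hnn : (0:ℝ) ≤ M₁*R*δ^(ε:ℝ) := by positivity
        have he1 : (4*M₁*R) * (2*δ^(ε:ℝ)) + (16*M₁*R/ε) * δ^(ε:ℝ)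
            = (8 + 16/ε) * (M₁*R*δ^(ε:ℝ)) := by ring
        have he2 : (24/ε * M₁ * R) * δ^(ε:ℝ) = (8/ε + 16/ε) * (M₁*R*δ^(ε:ℝ)) := by ring
        rw [he1, he2]
        apply mul_le_mul_of_nonneg_right _ hnn
        linarith
    _ ≤ (24/ε * M₁ * R) * (2*δ^(α:ℝ)) := by
        apply mul_le_mul_of_nonneg_left hδε
        positivity
    _ ≤ 48/ε * (|M₁|+1) * R * δ^(α:ℝ) := by
        have hM : M₁ ≤ |M₁|+1 := le_trans (le_abs_self M₁) (by linarith)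
        have he1 : (24/ε * M₁ * R) * (2*δ^(α:ℝ)) = (48/ε) * M₁ * (R * δ^(α:ℝ)) := by ring
        have he2 : 48/ε * (|M₁|+1) * R * δ^(α:ℝ) = (48/ε) * (|M₁|+1) * (R * δ^(α:ℝ)) := by
          ring
        rw [he1, he2]
        apply mul_le_mul_of_nonneg_right _ (by positivity)
        apply mul_le_mul_of_nonneg_left hM
        positivity
end

section
/- Let ε ∈ (0,1), α ∈ (0, ε), and let f(z) = ∑_{n≥0} a_n z^n have radius of convergence R > 0. Then for every z ∈ (0,R), the fractional derivative δ^α f(z) = ∑_{n≥1} n^α a_n z^n satisfies the integral representation δ^α f(z) = (1/Γ(2−α)) ∫_0^∞ f'(z·e^{−λ^{1/(1−α)}}) · z·e^{−λ^{1/(1−α)}} dλ, where Γ denotes the Gamma function. -/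
open MeasureTheory

-- geometric bound lemma
private lemma aux_bound {a : ℕ → ℂ} {R : ℝ} (hR : 0 < R)
    (hconv : ∀ z : ℂ, ‖z‖ < R → Summable fun n : ℕ => a n * z ^ n)
    {z : ℝ} (hz0 : 0 < z) (hzR : z < R) :
    Summable (fun n : ℕ => (n : ℝ) * (‖a n‖ * z ^ n)) := by
  set r : ℝ := (z + R) / 2 with hrdef
  have hrpos : 0 < r := by positivity
  have hzr : z < r := by simp only [hrdef]; linarith
  have hrR : r < R := by simp only [hrdef]; linarith
  have hs : Summable fun n => a n * (r : ℂ) ^ n := by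
    apply hconv
    rw [Complex.norm_real, Real.norm_eq_abs, abs_of_pos hrpos]; exact hrR
  have h0 : Filter.Tendsto (fun n => ‖a n * (r : ℂ) ^ n‖) Filter.atTop (nhds 0) := by
    simpa using hs.tendsto_atTop_zero.norm
  obtain ⟨C, hC⟩ := h0.bddAbove_range
  have hq : |z / r| < 1 := by
    rw [abs_of_pos (by positivity)]
    rw [div_lt_one hrpos]; exact hzr
  have hgeo : Summable (fun n : ℕ => C * ((n : ℝ) ^ 1 * (z / r) ^ n)) :=
    (summable_pow_mul_geometric_of_norm_lt_one 1 (by rwa [Real.norm_eq_abs])).mul_left C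
  apply Summable.of_nonneg_of_le (fun n => by positivity) _ hgeo
  intro n
  have hnorm : ‖a n * (r : ℂ) ^ n‖ = ‖a n‖ * r ^ n := by
    rw [norm_mul, norm_pow, Complex.norm_real, Real.norm_eq_abs, abs_of_pos hrpos]
  have hCn : ‖a n‖ * r ^ n ≤ C := by
    rw [← hnorm]; exact hC ⟨n, rfl⟩
  have : (n : ℝ) * (‖a n‖ * z ^ n) = (‖a n‖ * r ^ n) * ((n : ℝ) * (z / r) ^ n) := by
    field_simp
    rw [mul_assoc _ (r ^ n), ← mul_pow, mul_div_assoc', mul_div_cancel_left₀ z hrpos.ne']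
  rw [this]
  simp only [pow_one]
  have hnn : (0:ℝ) ≤ (n : ℝ) * (z / r) ^ n := by positivity
  exact mul_le_mul_of_nonneg_right hCn hnn

private lemma aux_deriv {a : ℕ → ℂ} {R : ℝ} (hR : 0 < R)
    (hconv : ∀ z : ℂ, ‖z‖ < R → Summable fun n : ℕ => a n * z ^ n)
    {w : ℂ} (hw : ‖w‖ < R) :
    HasSum (fun n : ℕ => (n : ℂ) * a n * w ^ n)
      (deriv (fun u : ℂ => ∑' n : ℕ, a n * u ^ n) w * w) := by
  set p := FormalMultilinearSeries.ofScalars ℂ a with hp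
  have hnorm : ∀ n, ‖p n‖ = ‖a n‖ := fun n => FormalMultilinearSeries.ofScalars_norm ℂ a n
  have hrad : ENNReal.ofReal R ≤ p.radius := by
    apply ENNReal.le_of_forall_nnreal_lt
    intro r hr
    have hrR : (r : ℝ) < R := by
      rwa [← ENNReal.ofReal_coe_nnreal, ENNReal.ofReal_lt_ofReal_iff hR] at hr
    apply p.le_radius_of_tendsto (l := 0)
    have hs := hconv ((r : ℝ) : ℂ) (by simpa [Complex.norm_real, abs_of_nonneg r.coe_nonneg])
    have := hs.tendsto_atTop_zero.norm
    simp only [norm_mul, norm_pow, Complex.norm_real, Real.norm_eq_abs,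
      abs_of_nonneg r.coe_nonneg, norm_zero] at this
    simpa [hnorm] using this
  have hfeq : (fun u : ℂ => ∑' n : ℕ, a n * u ^ n) = p.sum := by
    funext u
    exact (tsum_congr fun n => by
      rw [FormalMultilinearSeries.ofScalars_apply_eq, smul_eq_mul]).symm
  have hpos : 0 < p.radius := lt_of_lt_of_le (ENNReal.ofReal_pos.2 hR) hrad
  have hball : HasFPowerSeriesOnBall (fun u : ℂ => ∑' n : ℕ, a n * u ^ n) p 0
      (ENNReal.ofReal R) := by
    rw [hfeq]
    exact (p.hasFPowerSeriesOnBall hpos).mono (ENNReal.ofReal_pos.2 hR) hrad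
  have hw' : w ∈ Metric.eball (0 : ℂ) (ENNReal.ofReal R) := by
    rw [Metric.mem_eball, edist_zero_right, ← ofReal_norm]
    exact (ENNReal.ofReal_lt_ofReal_iff hR).mpr hw
  have hd := hball.fderiv
  have hsum := hd.hasSum hw'
  rw [zero_add] at hsum
  have happ := (ContinuousLinearMap.apply ℂ ℂ w).hasSum hsum
  have hterm : ∀ n : ℕ, (ContinuousLinearMap.apply ℂ ℂ w) (p.derivSeries n fun _ => w)
      = ((n : ℂ) + 1) * a (n + 1) * w ^ (n + 1) := by
    intro n
    rw [ContinuousLinearMap.apply_apply, p.derivSeries_apply_diag,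
      FormalMultilinearSeries.ofScalars_apply_eq]
    push_cast
    rw [nsmul_eq_mul, smul_eq_mul]
    push_cast
    ring
  have hval : (ContinuousLinearMap.apply ℂ ℂ w)
      (fderiv ℂ (fun u : ℂ => ∑' n : ℕ, a n * u ^ n) w)
      = deriv (fun u : ℂ => ∑' n : ℕ, a n * u ^ n) w * w := by
    rw [ContinuousLinearMap.apply_apply]
    have : fderiv ℂ (fun u : ℂ => ∑' n : ℕ, a n * u ^ n) w w
        = w • fderiv ℂ (fun u : ℂ => ∑' n : ℕ, a n * u ^ n) w 1 := by
      rw [← (fderiv ℂ (fun u : ℂ => ∑' n : ℕ, a n * u ^ n) w).map_smul, smul_eq_mul, mul_one]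
    rw [this, fderiv_apply_one_eq_deriv, smul_eq_mul, mul_comm]
  rw [funext hterm, hval] at happ
  have := (hasSum_nat_add_iff' (f := fun n : ℕ => (n : ℂ) * a n * w ^ n) 1).mp (by simpa using happ)
  exact this

/-- Integral representation of the fractional derivative `δ^α f(z)`. -/
theorem stmt_3 (a : ℕ → ℂ) (R ε α : ℝ) (hR : 0 < R) (hε : ε ∈ Set.Ioo (0 : ℝ) 1)
    (hα : α ∈ Set.Ioo (0 : ℝ) ε)
    (hconv : ∀ z : ℂ, ‖z‖ < R → Summable fun n : ℕ => a n * z ^ n) :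
    ∀ z : ℝ, 0 < z → z < R →
      (∑' n : ℕ, (((n : ℝ) ^ α : ℝ) : ℂ) * a n * (z : ℂ) ^ n) =
        ((Real.Gamma (2 - α) : ℝ) : ℂ)⁻¹ *
          ∫ t in Set.Ioi (0 : ℝ),
            deriv (fun w : ℂ => ∑' n : ℕ, a n * w ^ n)
                ((z : ℂ) * ((Real.exp (-(t ^ ((1 : ℝ) / (1 - α)))) : ℝ) : ℂ)) *
              ((z : ℂ) * ((Real.exp (-(t ^ ((1 : ℝ) / (1 - α)))) : ℝ) : ℂ)) := by
  obtain ⟨hε0, hε1⟩ := hε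
  obtain ⟨hα0, hαε⟩ := hα
  intro z hz0 hzR
  have hα1 : α < 1 := lt_trans hαε hε1
  have h1α : 0 < 1 - α := by linarith
  set q : ℝ := (1 : ℝ) / (1 - α) with hqdef
  have hq0 : 0 < q := by positivity
  have hq1 : 1 ≤ q := by
    rw [hqdef, le_div_iff₀ h1α]; linarith
  have hqinv : 1 / q = 1 - α := by rw [hqdef]; field_simp
  have hΓpos : 0 < Real.Gamma (2 - α) := Real.Gamma_pos_of_pos (by linarith)
  set w : ℝ → ℂ := fun t => (z : ℂ) * ((Real.exp (-(t ^ q)) : ℝ) : ℂ) with hwdef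
  set F : ℕ → ℝ → ℂ := fun n t => (n : ℂ) * a n * (w t) ^ n with hFdef
  -- norm of w t
  have hwnorm : ∀ t : ℝ, t ∈ Set.Ioi (0:ℝ) → ‖w t‖ < R := by
    intro t ht
    have htq : 0 ≤ t ^ q := Real.rpow_nonneg (le_of_lt ht) q
    have hexp : Real.exp (-(t ^ q)) ≤ 1 := Real.exp_le_one_iff.mpr (by linarith)
    have hexp0 : 0 < Real.exp (-(t ^ q)) := Real.exp_pos _
    calc ‖w t‖ = z * Real.exp (-(t ^ q)) := by
          rw [hwdef]; simp only [norm_mul, Complex.norm_real, Real.norm_eq_abs,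
            abs_of_pos hz0, abs_of_pos hexp0]
      _ ≤ z * 1 := by nlinarith
      _ < R := by linarith
  -- pointwise identity of the integrand with the tsum of F
  have hpt : ∀ t ∈ Set.Ioi (0:ℝ),
      deriv (fun u : ℂ => ∑' n : ℕ, a n * u ^ n) (w t) * (w t) = ∑' n, F n t := by
    intro t ht
    exact ((aux_deriv hR hconv (hwnorm t ht)).tsum_eq).symm
  -- F in separated form
  have hFsep : ∀ (n : ℕ) (t : ℝ), 0 < t → F n t
      = ((n : ℂ) * a n * (z : ℂ) ^ n) * ((Real.exp (-((n:ℝ) * t ^ q)) : ℝ) : ℂ) := by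
    intro n t ht
    rw [hFdef, hwdef]
    simp only [mul_pow, ← Complex.ofReal_pow, ← Real.exp_nat_mul, mul_neg, neg_mul]
    ring
  -- the Gamma integral
  have key : ∀ n : ℕ, 0 < n →
      ∫ t in Set.Ioi (0:ℝ), Real.exp (-((n:ℝ) * t ^ q))
        = (n:ℝ) ^ (α - 1) * Real.Gamma (2 - α) := by
    intro n hn
    have hnpos : (0:ℝ) < (n:ℝ) := by exact_mod_cast hn
    rw [show (fun t : ℝ => Real.exp (-((n:ℝ) * t ^ q))) = fun t : ℝ => Real.exp (-(n:ℝ) * t ^ q) by funext t; rw [neg_mul], integral_exp_neg_mul_rpow hq0 hnpos, hqinv]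
    congr 1
    · rw [neg_div, hqinv]; ring_nf
    · ring_nf
  -- integrability of the real kernel
  have hgint : ∀ n : ℕ, 0 < n →
      IntegrableOn (fun t : ℝ => Real.exp (-((n:ℝ) * t ^ q))) (Set.Ioi 0) := by
    intro n hn
    have hnpos : (0:ℝ) < (n:ℝ) := by exact_mod_cast hn
    have := integrableOn_rpow_mul_exp_neg_mul_rpow (s := 0) (by norm_num) hq0 hnpos
    simpa [Real.rpow_zero, neg_mul] using this
  -- integrability of F n
  have hFint : ∀ n : ℕ, Integrable (F n) (volume.restrict (Set.Ioi 0)) := by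
    intro n
    rcases Nat.eq_zero_or_pos n with hn | hn
    · subst hn
      have : F 0 = fun _ => 0 := by funext t; simp [hFdef]
      rw [this]; exact integrable_zero _ _ _
    · have h1 : IntegrableOn (fun t : ℝ => ((Real.exp (-((n:ℝ) * t ^ q)) : ℝ) : ℂ))
          (Set.Ioi 0) := (hgint n hn).ofReal
      have hint : IntegrableOn (fun t : ℝ => ((n : ℂ) * a n * (z : ℂ) ^ n)
          * ((Real.exp (-((n:ℝ) * t ^ q)) : ℝ) : ℂ)) (Set.Ioi 0) :=
        h1.const_mul ((n : ℂ) * a n * (z : ℂ) ^ n)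
      exact hint.congr_fun (fun t ht => (hFsep n t ht).symm) measurableSet_Ioi
  -- value of each integral
  have hFval : ∀ n : ℕ, (∫ t in Set.Ioi (0:ℝ), F n t)
      = ((Real.Gamma (2 - α) : ℝ) : ℂ) * ((((n:ℝ) ^ α : ℝ)) : ℂ) * a n * (z:ℂ) ^ n := by
    intro n
    rcases Nat.eq_zero_or_pos n with hn | hn
    · subst hn
      have h0 : F 0 = fun _ => 0 := by funext t; simp [hFdef]
      rw [h0]
      simp [Real.zero_rpow (ne_of_gt hα0)]
    · have hnpos : (0:ℝ) < (n:ℝ) := by exact_mod_cast hn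
      have hstep : (∫ t in Set.Ioi (0:ℝ), F n t)
          = ∫ t in Set.Ioi (0:ℝ), ((n : ℂ) * a n * (z : ℂ) ^ n)
              * ((Real.exp (-((n:ℝ) * t ^ q)) : ℝ) : ℂ) :=
        setIntegral_congr_fun measurableSet_Ioi (fun t ht => hFsep n t ht)
      have hcoe : (∫ t in Set.Ioi (0:ℝ), ((Real.exp (-((n:ℝ) * t ^ q)) : ℝ) : ℂ))
          = ((∫ t in Set.Ioi (0:ℝ), Real.exp (-((n:ℝ) * t ^ q)) : ℝ) : ℂ) := integral_ofReal
      rw [hstep, integral_const_mul, hcoe, key n hn]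
      have hr : (n:ℝ) * ((n:ℝ) ^ (α - 1)) = (n:ℝ) ^ α := by
        nth_rewrite 1 [← Real.rpow_one (n:ℝ)]
        rw [← Real.rpow_add hnpos]
        ring_nf
      rw [show ((((n:ℝ) ^ α : ℝ)) : ℂ) = ((n:ℝ):ℂ) * (((n:ℝ) ^ (α-1) : ℝ):ℂ) by
        rw [← Complex.ofReal_mul, hr], Complex.ofReal_mul]
      push_cast
      ring
  -- bound on the integrals of the norms
  have hnormint : ∀ n : ℕ, (∫ t in Set.Ioi (0:ℝ), ‖F n t‖)
      ≤ Real.Gamma (2-α) * ((n:ℝ) * (‖a n‖ * z ^ n)) := by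
    intro n
    rcases Nat.eq_zero_or_pos n with hn | hn
    · subst hn
      have h0 : F 0 = fun _ => 0 := by funext t; simp [hFdef]
      rw [h0]
      simp only [norm_zero, integral_zero]
      positivity
    · have hnpos : (0:ℝ) < (n:ℝ) := by exact_mod_cast hn
      have hn1 : (1:ℝ) ≤ (n:ℝ) := by exact_mod_cast hn
      have heq : ∀ t ∈ Set.Ioi (0:ℝ), ‖F n t‖
          = ((n:ℝ) * (‖a n‖ * z ^ n)) * Real.exp (-((n:ℝ) * t ^ q)) := by
        intro t ht
        rw [hFsep n t ht]
        rw [norm_mul, norm_mul, norm_mul, Complex.norm_natCast, norm_pow,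
          Complex.norm_real, Complex.norm_real, Real.norm_eq_abs, Real.norm_eq_abs,
          abs_of_pos hz0, abs_of_pos (Real.exp_pos _)]
        ring
      have hstep : (∫ t in Set.Ioi (0:ℝ), ‖F n t‖)
          = ((n:ℝ) * (‖a n‖ * z ^ n)) * ((n:ℝ) ^ (α - 1) * Real.Gamma (2 - α)) := by
        rw [setIntegral_congr_fun measurableSet_Ioi heq, integral_const_mul, key n hn]
      rw [hstep]
      have hle1 : (n:ℝ) ^ (α - 1) ≤ 1 :=
        Real.rpow_le_one_of_one_le_of_nonpos hn1 (by linarith)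
      have hA : (0:ℝ) ≤ (n:ℝ) * (‖a n‖ * z ^ n) := by positivity
      have hpow0 : (0:ℝ) ≤ (n:ℝ) ^ (α - 1) := Real.rpow_nonneg (le_of_lt hnpos) _
      calc ((n:ℝ) * (‖a n‖ * z ^ n)) * ((n:ℝ) ^ (α - 1) * Real.Gamma (2 - α))
          = (((n:ℝ) * (‖a n‖ * z ^ n)) * (n:ℝ) ^ (α - 1)) * Real.Gamma (2 - α) := by ring
        _ ≤ ((n:ℝ) * (‖a n‖ * z ^ n)) * Real.Gamma (2 - α) := by
            apply mul_le_mul_of_nonneg_right _ hΓpos.le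
            nlinarith
        _ = Real.Gamma (2-α) * ((n:ℝ) * (‖a n‖ * z ^ n)) := mul_comm _ _
  have hsummable : Summable (fun n : ℕ => ∫ t in Set.Ioi (0:ℝ), ‖F n t‖) := by
    apply Summable.of_nonneg_of_le
      (fun n => integral_nonneg (fun t => norm_nonneg _)) hnormint
    exact (aux_bound hR hconv hz0 hzR).mul_left _
  have hinter := MeasureTheory.integral_tsum_of_summable_integral_norm hFint hsummable
  have hgoalint : (∫ t in Set.Ioi (0:ℝ),
        deriv (fun u : ℂ => ∑' n : ℕ, a n * u ^ n)
          ((z : ℂ) * ((Real.exp (-(t ^ q)) : ℝ) : ℂ)) *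
        ((z : ℂ) * ((Real.exp (-(t ^ q)) : ℝ) : ℂ)))
      = ((Real.Gamma (2 - α) : ℝ) : ℂ) *
        (∑' n : ℕ, (((n : ℝ) ^ α : ℝ) : ℂ) * a n * (z : ℂ) ^ n) := by
    calc (∫ t in Set.Ioi (0:ℝ),
        deriv (fun u : ℂ => ∑' n : ℕ, a n * u ^ n)
          ((z : ℂ) * ((Real.exp (-(t ^ q)) : ℝ) : ℂ)) *
        ((z : ℂ) * ((Real.exp (-(t ^ q)) : ℝ) : ℂ)))
        = ∫ t in Set.Ioi (0:ℝ), ∑' n : ℕ, F n t :=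
          setIntegral_congr_fun measurableSet_Ioi hpt
      _ = ∑' n : ℕ, ∫ t in Set.Ioi (0:ℝ), F n t := hinter.symm
      _ = ∑' n : ℕ, (((Real.Gamma (2 - α) : ℝ) : ℂ) *
            ((((n:ℝ) ^ α : ℝ)) : ℂ) * a n * (z:ℂ) ^ n) := tsum_congr hFval
      _ = ((Real.Gamma (2 - α) : ℝ) : ℂ) *
            (∑' n : ℕ, (((n : ℝ) ^ α : ℝ) : ℂ) * a n * (z : ℂ) ^ n) := by
          simp_rw [mul_assoc]
          rw [tsum_mul_left]
  rw [hgoalint, ← mul_assoc, inv_mul_cancel₀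
    (Complex.ofReal_ne_zero.mpr (ne_of_gt hΓpos)), one_mul]
end

section
/- Let f(z) = ∑_{n≥0} a_n z^n have radius of convergence at least R > 0, let j ≥ 1 be an integer and b > 1 a real number. If the j-th derivative satisfies |f^{(j)}(z)| ≤ M·|1 − z/R|^{-b} for all |z| < R, then there is a constant M' such that |a_n| ≤ M'·R^{-n}·n^{b-1-j} for all n ≥ 1. -/
open Real Set MeasureTheory intervalIntegral Filter Topology Nat


lemma aux_pw {ρ θ : ℝ} (hρ1 : 1/2 ≤ ρ) (hρ2 : ρ ≤ 1) (hθ : |θ| ≤ π) :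
    ((1 - ρ) + (Real.sqrt 2 / π) * |θ|) / Real.sqrt 2
      ≤ ‖(1 : ℂ) - (ρ : ℂ) * Complex.exp (θ * Complex.I)‖ := by
  have hπ := Real.pi_pos
  have hs2 : (0:ℝ) < Real.sqrt 2 := by positivity
  have hsq : Real.sqrt 2 ^ 2 = 2 := Real.sq_sqrt (by norm_num)
  have hnorm : ‖(1 : ℂ) - (ρ : ℂ) * Complex.exp (θ * Complex.I)‖ ^ 2
      = (1 - ρ)^2 + 2*ρ*(1 - Real.cos θ) := by
    rw [Complex.sq_norm, Complex.normSq_apply]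
    simp only [Complex.sub_re, Complex.sub_im, Complex.mul_re, Complex.mul_im,
      Complex.ofReal_re, Complex.ofReal_im, Complex.one_re, Complex.one_im,
      Complex.exp_ofReal_mul_I_re, Complex.exp_ofReal_mul_I_im]
    nlinarith [Real.sin_sq_add_cos_sq θ]
  have hcos : Real.cos θ ≤ 1 - 2/π^2 * θ^2 := Real.cos_le_one_sub_mul_cos_sq hθ
  have hA : 0 ≤ (1 - ρ) + (Real.sqrt 2 / π) * |θ| :=
    add_nonneg (by linarith) (by positivity)
  have hsq' : ((1 - ρ) + (Real.sqrt 2 / π) * |θ|)^2 / 2 ≤ (1 - ρ)^2 + 2*ρ*(1 - Real.cos θ) := by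
    have h1 : |θ|^2 = θ^2 := sq_abs θ
    have h2 : 2*(1-ρ)*((Real.sqrt 2/π)*|θ|) ≤ (1-ρ)^2 + ((Real.sqrt 2/π)*|θ|)^2 :=
      two_mul_le_add_sq _ _
    have h3 : ((Real.sqrt 2/π)*|θ|)^2 = 2/π^2 * θ^2 := by
      rw [mul_pow, div_pow, hsq, h1]
    nlinarith [sq_nonneg θ, sq_nonneg (1-ρ)]
  have hnn := norm_nonneg ((1 : ℂ) - (ρ : ℂ) * Complex.exp (θ * Complex.I))
  set A := (1 - ρ) + (Real.sqrt 2 / π) * |θ| with hAdef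
  set N := ‖(1 : ℂ) - (ρ : ℂ) * Complex.exp (θ * Complex.I)‖ with hNdef
  have h6 : A^2/2 ≤ N^2 := by rw [hnorm]; exact hsq'
  have key : A^2 ≤ (N*Real.sqrt 2)^2 := by rw [mul_pow, hsq]; clear_value A N; linarith
  have : A ≤ N * Real.sqrt 2 := by
    calc A = Real.sqrt (A^2) := (Real.sqrt_sq hA).symm
    _ ≤ Real.sqrt ((N*Real.sqrt 2)^2) := Real.sqrt_le_sqrt key
    _ = N*Real.sqrt 2 := Real.sqrt_sq (by positivity)
  rw [div_le_iff₀ hs2]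
  linarith

lemma aux_ftc {δ c b : ℝ} (hδ : 0 < δ) (hc : 0 < c) (hb : 1 < b) {L : ℝ} (hL : 0 ≤ L) :
    ∫ θ in (0:ℝ)..L, (δ + c*θ) ^ (-b) ≤ δ^(1-b)/(c*(b-1)) := by
  have hderiv : ∀ θ ∈ Set.uIcc (0:ℝ) L,
      HasDerivAt (fun t => -(δ + c*t)^(1-b)/(c*(b-1))) ((δ + c*θ) ^ (-b)) θ := by
    intro θ hθ
    have hθ0 : 0 ≤ θ := by
      rcases Set.mem_uIcc.1 hθ with h | h
      · exact h.1
      · linarith [h.1, h.2]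
    have hpos : 0 < δ + c*θ := by nlinarith
    have h1 : HasDerivAt (fun t : ℝ => δ + c*t) c θ := by
      simpa using ((hasDerivAt_id θ).const_mul c).const_add δ
    have h2 : HasDerivAt (fun x : ℝ => x ^ (1-b)) ((1-b) * (δ+c*θ)^(1-b-1)) (δ+c*θ) :=
      Real.hasDerivAt_rpow_const (Or.inl hpos.ne')
    have h3 := (h2.comp θ h1).div_const (c*(b-1))
    have h4 := h3.neg
    have hne : c*(b-1) ≠ 0 := (mul_pos hc (by linarith)).ne'
    refine HasDerivAt.congr_deriv (h4.congr_of_eventuallyEq (Filter.Eventually.of_forall fun t => ?_)) ?_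
    · simp only [Function.comp_apply, Pi.neg_apply]; ring
    · rw [show (1:ℝ)-b-1 = -b by ring]
      field_simp
      rw [neg_div', neg_sub, div_self (ne_of_gt (by linarith))]
  have hcont : IntervalIntegrable (fun θ : ℝ => (δ + c*θ) ^ (-b)) volume 0 L := by
    apply ContinuousOn.intervalIntegrable
    apply ContinuousOn.rpow_const
    · fun_prop
    · intro θ hθ
      have hθ0 : 0 ≤ θ := by
        rcases Set.mem_uIcc.1 hθ with h | h
        · exact h.1
        · linarith [h.1, h.2]
      left; nlinarith
  rw [intervalIntegral.integral_eq_sub_of_hasDerivAt hderiv hcont]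
  have h5 : (0:ℝ) ≤ (δ + c*L)^(1-b) := Real.rpow_nonneg (by nlinarith) _
  have h6 : (0:ℝ) < c*(b-1) := by nlinarith
  rw [mul_zero, add_zero, div_sub_div_same]
  gcongr
  linarith

lemma aux_pow {m : ℕ} (hm : 2 ≤ m) : ((1 - 1/(m:ℝ)))⁻¹ ^ m ≤ Real.exp 2 := by
  have hm1 : (2:ℝ) ≤ (m:ℝ) := by exact_mod_cast hm
  have hm0 : (0:ℝ) < m := by linarith
  have h2 : (0:ℝ) < (m:ℝ) - 1 := by linarith
  have h1 : (1 - 1/(m:ℝ))⁻¹ = 1 + 1/((m:ℝ)-1) := by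
    rw [show (1 - 1/(m:ℝ)) = ((m:ℝ)-1)/m by field_simp, inv_div]
    field_simp
    ring
  have h3 : 1 + 1/((m:ℝ)-1) ≤ Real.exp (1/((m:ℝ)-1)) := by
    have := Real.add_one_le_exp (1/((m:ℝ)-1))
    linarith
  have h4 : (1 - 1/(m:ℝ))⁻¹ ^ m ≤ Real.exp (1/((m:ℝ)-1)) ^ m := by
    rw [h1]
    exact pow_le_pow_left₀ (by positivity) h3 m
  rw [← Real.exp_nat_mul] at h4
  refine h4.trans (Real.exp_le_exp.2 ?_)
  rw [mul_one_div, div_le_iff₀ h2]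
  linarith

lemma aux_int {δ c b : ℝ} (hδ : 0 < δ) (hc : 0 < c) (hb : 1 < b) :
    ∫ θ in (-π)..π, (δ + c*|θ|) ^ (-b) ≤ 2 * (δ^(1-b)/(c*(b-1))) := by
  have hπ := Real.pi_pos
  have hcont : Continuous (fun θ : ℝ => (δ + c*|θ|) ^ (-b)) := by
    apply Continuous.rpow_const
    · fun_prop
    · intro θ; left; positivity
  have hsplit : ∫ θ in (-π)..π, (δ + c*|θ|)^(-b)
      = (∫ θ in (-π)..(0:ℝ), (δ + c*|θ|)^(-b)) + ∫ θ in (0:ℝ)..π, (δ + c*|θ|)^(-b) :=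
    (intervalIntegral.integral_add_adjacent_intervals (hcont.intervalIntegrable _ _)
      (hcont.intervalIntegrable _ _)).symm
  have h1 : ∫ θ in (0:ℝ)..π, (δ + c*|θ|)^(-b) = ∫ θ in (0:ℝ)..π, (δ + c*θ)^(-b) := by
    apply intervalIntegral.integral_congr
    intro θ hθ
    rw [Set.uIcc_of_le hπ.le] at hθ
    simp only [abs_of_nonneg hθ.1]
  have h2 : ∫ θ in (-π)..(0:ℝ), (δ + c*|θ|)^(-b) = ∫ θ in (0:ℝ)..π, (δ + c*|θ|)^(-b) := by
    calc ∫ θ in (-π)..(0:ℝ), (δ + c*|θ|)^(-b)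
        = ∫ θ in (-π)..(0:ℝ), (δ + c*|(-θ)|)^(-b) := by
          apply intervalIntegral.integral_congr; intro θ _; simp only [abs_neg]
      _ = ∫ θ in (-(0:ℝ))..(-(-π)), (δ + c*|θ|)^(-b) :=
          intervalIntegral.integral_comp_neg (f := fun θ => (δ + c*|θ|)^(-b))
      _ = ∫ θ in (0:ℝ)..π, (δ + c*|θ|)^(-b) := by norm_num
  have h3 := aux_ftc hδ hc hb hπ.le
  rw [hsplit, h2, h1]
  linarith


lemma aux_coeff (a : ℕ → ℂ) (n : ℕ) : (FormalMultilinearSeries.ofScalars ℂ a).coeff n = a n := by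
  have h := FormalMultilinearSeries.ofScalars_apply_eq (c := a) (1 : ℂ) n
  rw [FormalMultilinearSeries.coeff]
  rw [show (1 : Fin n → ℂ) = fun _ => (1:ℂ) from rfl]
  rw [h, one_pow, smul_eq_mul, mul_one]

set_option maxHeartbeats 2000000 in
/-- Coefficient bounds from a bound on the `j`-th derivative of a generating function. -/
theorem stmt_15 (a : ℕ → ℂ) (f : ℂ → ℂ) (R b M : ℝ) (j : ℕ) (hj : 1 ≤ j)
    (hR : 0 < R) (hb : 1 < b)
    (hf : ∀ z : ℂ, ‖z‖ < R → HasSum (fun n => a n * z ^ n) (f z))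
    (hbd : ∀ z : ℂ, ‖z‖ < R → ‖iteratedDeriv j f z‖ ≤ M * ‖1 - z / (R : ℂ)‖ ^ (-b)) :
    ∃ M' : ℝ, ∀ n : ℕ, 1 ≤ n →
      ‖a n‖ ≤ M' * R ^ (-(n : ℝ)) * (n : ℝ) ^ (b - 1 - j) := by
  have hpf : HasFPowerSeriesOnBall f (FormalMultilinearSeries.ofScalars ℂ a) 0
      (ENNReal.ofReal R) := by
    constructor
    · apply ENNReal.le_of_forall_nnreal_lt
      intro t ht
      have htR : (t:ℝ) < R := by
        rw [← ENNReal.ofReal_coe_nnreal, ENNReal.ofReal_lt_ofReal_iff hR] at ht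
        exact ht
      have hz : ‖((t:ℝ) : ℂ)‖ < R := by
        simpa [Complex.norm_real, abs_of_nonneg t.2] using htR
      have h0 : Tendsto (fun n => a n * ((t:ℝ):ℂ)^n) atTop (𝓝 0) :=
        (hf _ hz).summable.tendsto_atTop_zero
      apply FormalMultilinearSeries.le_radius_of_isBigO
      have hO := h0.isBigO_one (F := ℝ)
      have heq : (fun n => ‖FormalMultilinearSeries.ofScalars ℂ a n‖ * (t:ℝ)^n)
          = fun n => ‖a n * ((t:ℝ):ℂ)^n‖ := by
        funext n
        simp [FormalMultilinearSeries.ofScalars_norm, norm_mul, norm_pow, Complex.norm_real,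
          Real.norm_of_nonneg t.2, abs_of_nonneg t.2, aux_coeff]
      rw [heq]
      exact hO.norm_left
    · exact ENNReal.ofReal_pos.2 hR
    · intro y hy
      rw [Metric.emetric_ball] at hy
      rw [mem_ball_zero_iff] at hy
      have := hf y hy
      rw [zero_add]
      convert this using 2 with n
      rfl
      rw [FormalMultilinearSeries.ofScalars_apply_eq, smul_eq_mul]
  have hcoeff : ∀ n : ℕ, iteratedDeriv n f 0 = (n ! : ℂ) * a n := by
    intro n
    have h := hpf.factorial_smul (1 : ℂ) n
    rw [iteratedDeriv_eq_iteratedFDeriv, ← h, FormalMultilinearSeries.ofScalars_apply_eq]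
    simp [nsmul_eq_mul]
  have hfball : DifferentiableOn ℂ f (Metric.ball 0 R) := by
    have := hpf.differentiableOn
    rwa [Metric.emetric_ball] at this
  have hgan : ∀ k : ℕ, AnalyticOnNhd ℂ (iteratedDeriv k f) (Metric.ball 0 R) := by
    intro k
    induction k with
    | zero => simpa [iteratedDeriv_zero] using hfball.analyticOnNhd Metric.isOpen_ball
    | succ k ih => rw [iteratedDeriv_succ]; exact ih.deriv
  have hgiter : ∀ m : ℕ, iteratedDeriv m (iteratedDeriv j f) 0 = iteratedDeriv (m + j) f 0 := by
    intro m
    simp only [iteratedDeriv_eq_iterate]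
    rw [← Function.iterate_add_apply]
  have key : ∀ n : ℕ, 2*j+2 ≤ n → ‖a n‖ ≤
      ((2*π)⁻¹ * (M * Real.sqrt 2 ^ b) * (2/((Real.sqrt 2/π)*(b-1))) * Real.exp 2 * 2^j * R^j)
        * (R ^ (-(n:ℝ)) * (n:ℝ) ^ (b-1-(j:ℝ))) := by
    have hgdiff : DifferentiableOn ℂ (iteratedDeriv j f) (Metric.ball 0 R) :=
      (hgan j).differentiableOn
    intro n hn
    have hπ := Real.pi_pos
    have hM : 0 ≤ M := by
      have h0 := hbd 0 (by simpa using hR)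
      have h1 : ‖(1:ℂ) - 0/(R:ℂ)‖ ^ (-b) = 1 := by norm_num
      rw [h1, mul_one] at h0
      exact (norm_nonneg _).trans h0
    set g := iteratedDeriv j f with hgdef
    -- basic numerics
    have hjn : j ≤ n := by omega
    set m := n - j with hmdef
    have hmn : m + j = n := by omega
    have hm2 : 2 ≤ m := by omega
    have hmj : j ≤ m := by omega
    have hmR : (2:ℝ) ≤ (m:ℝ) := by exact_mod_cast hm2
    have hmpos : (0:ℝ) < m := by linarith
    have hnpos : (0:ℝ) < n := by
      have : 0 < n := by omega
      exact_mod_cast this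
    set δ : ℝ := 1/(m:ℝ) with hδdef
    have hδpos : 0 < δ := by positivity
    have hδhalf : δ ≤ 1/2 := by
      rw [hδdef, div_le_div_iff₀ hmpos (by norm_num)]
      linarith
    set ρ : ℝ := 1 - δ with hρdef
    have hρ1 : 1/2 ≤ ρ := by rw [hρdef]; linarith
    have hρ2 : ρ < 1 := by rw [hρdef]; linarith
    set r : ℝ := ρ * R with hrdef
    have hr0 : 0 < r := by rw [hrdef]; nlinarith
    have hrR : r < R := by rw [hrdef]; nlinarith
    -- power series of g on the circle of radius r
    set rr : NNReal := ⟨r, hr0.le⟩ with hrrdef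
    have hrrval : (rr : ℝ) = r := rfl
    have hsub : Metric.closedBall (0:ℂ) (rr:ℝ) ⊆ Metric.ball 0 R := by
      rw [hrrval]; exact Metric.closedBall_subset_ball hrR
    have hqball : HasFPowerSeriesOnBall g (cauchyPowerSeries g 0 rr) 0 rr :=
      (hgdiff.mono hsub).hasFPowerSeriesOnBall (by exact_mod_cast hr0)
    set w : ℂ := cauchyPowerSeries g 0 (rr:ℝ) m (fun _ => (1:ℂ)) with hwdef
    have hw1 : (m ! : ℂ) * w = iteratedDeriv m g 0 := by
      have h := hqball.factorial_smul (1:ℂ) m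
      rw [← iteratedDeriv_eq_iteratedFDeriv] at h
      rw [← h, nsmul_eq_mul]
    have hw2 : (n ! : ℂ) * a n = (m ! : ℂ) * w := by
      rw [hw1, hgiter, hmn, hcoeff]
    have hw3 : (n ! : ℝ) * ‖a n‖ = (m ! : ℝ) * ‖w‖ := by
      have := congrArg norm hw2
      simpa [norm_mul, Complex.norm_natCast] using this
    -- bound on the coefficient via Cauchy's formula
    have hwle : ‖w‖ ≤ ‖cauchyPowerSeries g 0 (rr:ℝ) m‖ := by
      calc ‖w‖ ≤ ‖cauchyPowerSeries g 0 (rr:ℝ) m‖ * ∏ _i : Fin m, ‖(1:ℂ)‖ :=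
            ContinuousMultilinearMap.le_opNorm _ _
      _ = ‖cauchyPowerSeries g 0 (rr:ℝ) m‖ := by simp
    have hql := norm_cauchyPowerSeries_le g 0 (rr:ℝ) m
    rw [hrrval] at hql
    -- constants
    set c0 : ℝ := Real.sqrt 2 / π with hc0def
    have hc0 : 0 < c0 := by positivity
    have hcb : 0 < c0 * (b-1) := mul_pos hc0 (by linarith)
    set CA : ℝ := M * Real.sqrt 2 ^ b with hCAdef
    have hCA : 0 ≤ CA := mul_nonneg hM (Real.rpow_nonneg (Real.sqrt_nonneg 2) b)
    -- continuity
    have hcont1 : Continuous fun θ : ℝ => ‖g (circleMap 0 r θ)‖ := by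
      apply Continuous.norm
      apply ContinuousOn.comp_continuous hgdiff.continuousOn (continuous_circleMap 0 r)
      intro θ
      rw [mem_ball_zero_iff, norm_circleMap_zero, abs_of_pos hr0]
      exact hrR
    have hcont2 : Continuous fun θ : ℝ => CA * (δ + c0*|θ|) ^ (-b) := by
      apply Continuous.mul continuous_const
      apply Continuous.rpow_const
      · fun_prop
      · intro θ; left; positivity
    have hper : Function.Periodic (fun θ : ℝ => ‖g (circleMap 0 r θ)‖) (2*π) := fun θ =>
      congrArg (fun z => ‖g z‖) (periodic_circleMap 0 r θ)
    have hshift : (∫ θ in (0:ℝ)..2*π, ‖g (circleMap 0 r θ)‖)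
        = ∫ θ in (-π)..π, ‖g (circleMap 0 r θ)‖ := by
      have h := hper.intervalIntegral_add_eq 0 (-π)
      rw [zero_add, show -π + 2*π = π by ring] at h
      exact h
    -- pointwise bound
    have hpwg : ∀ θ ∈ Icc (-π) π, ‖g (circleMap 0 r θ)‖ ≤ CA * (δ + c0*|θ|)^(-b) := by
      intro θ hθ
      have hzlt : ‖circleMap 0 r θ‖ < R := by
        rw [norm_circleMap_zero, abs_of_pos hr0]; exact hrR
      have hb1 := hbd _ hzlt
      have hRne : (R:ℂ) ≠ 0 := Complex.ofReal_ne_zero.2 hR.ne'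
      have hdiv : (1:ℂ) - circleMap 0 r θ / (R:ℂ) = 1 - (ρ:ℂ) * Complex.exp (θ * Complex.I) := by
        rw [circleMap_zero, hrdef]
        push_cast
        field_simp
      have habs : |θ| ≤ π := abs_le.2 ⟨hθ.1, hθ.2⟩
      have hlow := aux_pw hρ1 hρ2.le habs
      have h1ρ : 1 - ρ = δ := by rw [hρdef]; ring
      rw [h1ρ] at hlow
      have hbase : (0:ℝ) < (δ + c0*|θ|)/Real.sqrt 2 := by positivity
      have hrle : ‖(1:ℂ) - circleMap 0 r θ / (R:ℂ)‖ ^ (-b)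
          ≤ ((δ + c0*|θ|)/Real.sqrt 2) ^ (-b) := by
        rw [hdiv]
        exact Real.rpow_le_rpow_of_nonpos hbase hlow (by linarith)
      have heq2 : ((δ + c0*|θ|)/Real.sqrt 2)^(-b) = (δ + c0*|θ|)^(-b) * Real.sqrt 2 ^ b := by
        rw [Real.div_rpow (by positivity) (Real.sqrt_nonneg 2),
          Real.rpow_neg (Real.sqrt_nonneg 2) b, div_eq_mul_inv, inv_inv]
      calc ‖g (circleMap 0 r θ)‖ ≤ M * ‖(1:ℂ) - circleMap 0 r θ / (R:ℂ)‖ ^ (-b) := hb1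
      _ ≤ M * ((δ + c0*|θ|)^(-b) * Real.sqrt 2 ^ b) := by
          rw [← heq2]; exact mul_le_mul_of_nonneg_left hrle hM
      _ = CA * (δ + c0*|θ|)^(-b) := by rw [hCAdef]; ring
    -- integral bound
    have hintle : (∫ θ in (0:ℝ)..2*π, ‖g (circleMap 0 r θ)‖)
        ≤ CA * (2 * (δ^(1-b)/(c0*(b-1)))) := by
      rw [hshift]
      calc (∫ θ in (-π)..π, ‖g (circleMap 0 r θ)‖)
          ≤ ∫ θ in (-π)..π, CA * (δ + c0*|θ|)^(-b) :=
            intervalIntegral.integral_mono_on (by linarith) (hcont1.intervalIntegrable _ _)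
              (hcont2.intervalIntegrable _ _) hpwg
        _ = CA * ∫ θ in (-π)..π, (δ + c0*|θ|)^(-b) := intervalIntegral.integral_const_mul _ _
        _ ≤ CA * (2 * (δ^(1-b)/(c0*(b-1)))) :=
            mul_le_mul_of_nonneg_left (aux_int hδpos hc0 hb) hCA
    have hδm : δ^(1-b) = (m:ℝ)^(b-1) := by
      rw [hδdef, one_div, Real.inv_rpow hmpos.le, ← Real.rpow_neg hmpos.le,
        show -(1-b) = b-1 by ring]
    have hrinv : |r|⁻¹ ^ m ≤ Real.exp 2 * (R⁻¹^n * R^j) := by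
      have hRm : R⁻¹^m = R⁻¹^n * R^j := by
        rw [← hmn, pow_add, mul_assoc, ← mul_pow, inv_mul_cancel₀ hR.ne', one_pow, mul_one]
      rw [abs_of_pos hr0, hrdef, mul_inv, mul_pow, hRm]
      apply mul_le_mul_of_nonneg_right ?_ (by positivity)
      have h := aux_pow hm2
      rw [hρdef, hδdef]
      exact h
    have hnn1 : (0:ℝ) ≤ (2*π)⁻¹ * (CA * (2 * ((m:ℝ)^(b-1)/(c0*(b-1))))) := by
      apply mul_nonneg (by positivity)
      apply mul_nonneg hCA
      apply mul_nonneg (by norm_num)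
      exact div_nonneg (Real.rpow_nonneg hmpos.le _) hcb.le
    have hw4 : ‖w‖ ≤ (2*π)⁻¹ * (CA * (2 * ((m:ℝ)^(b-1)/(c0*(b-1)))))
        * (Real.exp 2 * (R⁻¹^n * R^j)) := by
      calc ‖w‖ ≤ ‖cauchyPowerSeries g 0 (rr:ℝ) m‖ := hwle
      _ ≤ ((2*π)⁻¹ * ∫ θ in (0:ℝ)..2*π, ‖g (circleMap 0 r θ)‖) * |r|⁻¹^m := hql
      _ ≤ ((2*π)⁻¹ * (CA * (2*((m:ℝ)^(b-1)/(c0*(b-1)))))) * (Real.exp 2 * (R⁻¹^n * R^j)) := by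
          rw [← hδm]
          apply mul_le_mul ?_ hrinv (by positivity) (hδm ▸ hnn1)
          exact mul_le_mul_of_nonneg_left hintle (by positivity)
    -- factorial bound
    have hfr0 : (m ! : ℝ) * ((m:ℝ)+1)^j ≤ (n ! : ℝ) := by
      have h := Nat.factorial_mul_pow_le_factorial (m := m) (n := j)
      rw [hmn] at h
      exact_mod_cast h
    have hnf : (0:ℝ) < (n ! : ℝ) := by exact_mod_cast Nat.factorial_pos n
    have hfr : (m ! : ℝ)/(n ! : ℝ) ≤ 2^j * ((n:ℝ)⁻¹)^j := by
      have hA : (m !:ℝ)/(n !:ℝ) ≤ (((m:ℝ)+1)^j)⁻¹ := by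
        rw [div_le_iff₀ hnf]
        calc (m !:ℝ) = (((m:ℝ)+1)^j)⁻¹ * ((m !:ℝ) * ((m:ℝ)+1)^j) := by
              field_simp
          _ ≤ (((m:ℝ)+1)^j)⁻¹ * (n !:ℝ) := mul_le_mul_of_nonneg_left hfr0 (by positivity)
      have hB : (((m:ℝ)+1)⁻¹)^j ≤ (2*(n:ℝ)⁻¹)^j := by
        apply pow_le_pow_left₀ (by positivity)
        rw [show 2*(n:ℝ)⁻¹ = 2/(n:ℝ) by ring, ← one_div,
          div_le_div_iff₀ (by positivity) hnpos]
        have hnm : (n:ℝ) = (m:ℝ) + (j:ℝ) := by exact_mod_cast hmn.symm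
        have hjm : (j:ℝ) ≤ (m:ℝ) := by exact_mod_cast hmj
        linarith
      calc (m !:ℝ)/(n !:ℝ) ≤ (((m:ℝ)+1)^j)⁻¹ := hA
        _ = (((m:ℝ)+1)⁻¹)^j := by rw [inv_pow]
        _ ≤ (2*(n:ℝ)⁻¹)^j := hB
        _ = 2^j * ((n:ℝ)⁻¹)^j := by rw [mul_pow]
    -- rpow rewrites
    have hRn : R ^ (-(n:ℝ)) = R⁻¹^n := by
      rw [Real.rpow_neg hR.le, Real.rpow_natCast, inv_pow]
    have hnb : (n:ℝ)^(b-1-(j:ℝ)) = (n:ℝ)^(b-1) * ((n:ℝ)⁻¹)^j := by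
      rw [show b-1-(j:ℝ) = (b-1) + (-(j:ℝ)) by ring, Real.rpow_add hnpos,
        Real.rpow_neg hnpos.le, Real.rpow_natCast, inv_pow]
    have hmb : (m:ℝ)^(b-1) ≤ (n:ℝ)^(b-1) := by
      apply Real.rpow_le_rpow hmpos.le ?_ (by linarith)
      exact_mod_cast (by omega : m ≤ n)
    have han : ‖a n‖ = (m !:ℝ)/(n !:ℝ) * ‖w‖ := by
      rw [div_mul_eq_mul_div, eq_div_iff hnf.ne']
      linarith [hw3]
    rw [han, hRn, hnb]
    calc (m !:ℝ)/(n !:ℝ) * ‖w‖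
        ≤ (2^j * ((n:ℝ)⁻¹)^j) * ((2*π)⁻¹ * (CA * (2 * ((n:ℝ)^(b-1)/(c0*(b-1)))))
            * (Real.exp 2 * (R⁻¹^n * R^j))) := by
          apply mul_le_mul hfr ?_ (norm_nonneg _) (by positivity)
          refine hw4.trans ?_
          apply mul_le_mul_of_nonneg_right ?_ (by positivity)
          apply mul_le_mul_of_nonneg_left ?_ (by positivity)
          apply mul_le_mul_of_nonneg_left ?_ hCA
          apply mul_le_mul_of_nonneg_left ?_ (by norm_num)
          exact div_le_div_of_nonneg_right hmb hcb.le
      _ = ((2*π)⁻¹ * CA * (2/(c0*(b-1))) * Real.exp 2 * 2^j * R^j)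
          * (R⁻¹^n * ((n:ℝ)^(b-1) * ((n:ℝ)⁻¹)^j)) := by ring
  set K : ℝ := (2*π)⁻¹ * (M * Real.sqrt 2 ^ b) * (2/((Real.sqrt 2/π)*(b-1)))
      * Real.exp 2 * 2^j * R^j with hKdef
  refine ⟨max K ((Finset.range (2*j+2)).sup' (Finset.nonempty_range_iff.2 (by omega))
    fun i => ‖a i‖ / (R ^ (-(i:ℝ)) * (i:ℝ) ^ (b-1-(j:ℝ)))), ?_⟩
  intro n hn
  rw [mul_assoc]
  have hnpos : (0:ℝ) < (n:ℝ) := by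
    have : 0 < n := hn
    exact_mod_cast this
  have hD : (0:ℝ) < R ^ (-(n:ℝ)) * (n:ℝ) ^ (b-1-(j:ℝ)) :=
    mul_pos (Real.rpow_pos_of_pos hR _) (Real.rpow_pos_of_pos hnpos _)
  by_cases hcase : 2*j+2 ≤ n
  · refine (key n hcase).trans ?_
    exact mul_le_mul_of_nonneg_right (le_max_left _ _) hD.le
  · have hmem : n ∈ Finset.range (2*j+2) := Finset.mem_range.2 (by omega)
    have hle := Finset.le_sup' (f := fun i => ‖a i‖ / (R ^ (-(i:ℝ)) * (i:ℝ) ^ (b-1-(j:ℝ)))) hmem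
    calc ‖a n‖ = (‖a n‖ / (R ^ (-(n:ℝ)) * (n:ℝ) ^ (b-1-(j:ℝ))))
          * (R ^ (-(n:ℝ)) * (n:ℝ) ^ (b-1-(j:ℝ))) := by
          rw [div_mul_cancel₀ _ hD.ne']
      _ ≤ _ := mul_le_mul_of_nonneg_right (hle.trans (le_max_right _ _)) hD.le
end

section
/- Suppose E_z = ∑_{n≥0} e_n z^n has radius of convergence at least 1, and suppose its derivative satisfies |dE_z/dz| ≤ M(|1−z|^{ε−3/2} + A|1−z|^{−3/2} + B|1−z|^{−2}) for all |z| < 1, where ε ∈ (0,1/2) and A, B, M ≥ 0. Then there is a constant M' (independent of n, A, B) such that |e_n| ≤ M'·M·(n^{−1/2−ε} + A·n^{−1/2} + B) for all n ≥ 1. -/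
open Real intervalIntegral


lemma geom_lb {r θ : ℝ} (hr : 1/2 ≤ r) (hr1 : r < 1) (hθ0 : 0 ≤ θ) (hθ1 : θ ≤ 2*π) :
    (1 - r + min θ (2*π - θ)) / (Real.sqrt 2 * π) ≤ ‖(1 : ℂ) - circleMap 0 r θ‖ := by
  have hπ := Real.pi_gt_three
  have hd0 : 0 ≤ min θ (2*π - θ) := le_min hθ0 (by linarith)
  have hz : (1 : ℂ) - circleMap 0 r θ = Complex.mk (1 - r * Real.cos θ) (-(r * Real.sin θ)) := by
    apply Complex.ext <;>
      simp [circleMap, Complex.exp_mul_I, Complex.sub_re, Complex.sub_im, Complex.mul_re,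
        Complex.mul_im, Complex.cos_ofReal_re, Complex.sin_ofReal_re]
  have hnorm : ‖(1 : ℂ) - circleMap 0 r θ‖ =
      Real.sqrt ((1 - r * Real.cos θ)^2 + (r * Real.sin θ)^2) := by
    rw [hz, Complex.norm_def, Complex.normSq_mk]
    ring_nf
  rw [hnorm, Real.le_sqrt (div_nonneg (by linarith) (by positivity)) (by positivity), div_pow,
    mul_pow, Real.sq_sqrt (by norm_num : (0:ℝ) ≤ 2)]
  set d := min θ (2*π - θ) with hd
  set s := Real.sin (θ/2) with hs
  have hcos : Real.cos θ = 1 - 2 * s^2 := by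
    have h3 := Real.cos_two_mul' (θ/2)
    rw [show 2*(θ/2) = θ by ring] at h3
    have h2 := Real.sin_sq_add_cos_sq (θ/2)
    rw [hs]; linarith
  have hs0 : 0 ≤ s := Real.sin_nonneg_of_nonneg_of_le_pi (by linarith) (by linarith)
  have hds : d ≤ π * s := by
    rcases le_total θ π with h | h
    · have h1 : 2/π * (θ/2) ≤ Real.sin (θ/2) := Real.mul_le_sin (by linarith) (by linarith)
      rw [div_mul_eq_mul_div, div_le_iff₀ (by positivity)] at h1
      exact le_trans (min_le_left _ _) (by rw [hs]; nlinarith)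
    · have heq : Real.sin (θ/2) = Real.sin ((2*π - θ)/2) := by
        rw [show (2*π - θ)/2 = π - θ/2 by ring, Real.sin_pi_sub]
      have h1 : 2/π * ((2*π-θ)/2) ≤ Real.sin ((2*π-θ)/2) :=
        Real.mul_le_sin (by linarith) (by linarith)
      rw [div_mul_eq_mul_div, div_le_iff₀ (by positivity)] at h1
      exact le_trans (min_le_right _ _) (by rw [hs, heq]; nlinarith)
  have hsin2 : Real.sin θ^2 = 1 - Real.cos θ^2 := by
    nlinarith [Real.sin_sq_add_cos_sq θ]
  have hRHS : (1 - r * Real.cos θ)^2 + (r * Real.sin θ)^2 = (1-r)^2 + 4*r*s^2 := by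
    rw [mul_pow r, hsin2, hcos]; ring
  rw [hRHS, div_le_iff₀ (by positivity)]
  have h1 : (1 - r + d)^2 ≤ 2*(1-r)^2 + 2*d^2 := by nlinarith [sq_nonneg (1 - r - d)]
  have h2 : d^2 ≤ π^2 * s^2 := by nlinarith
  have hπ2 : (1:ℝ) ≤ π^2 := by nlinarith
  nlinarith [mul_nonneg (mul_nonneg (by linarith : (0:ℝ) ≤ π^2) (by linarith : (0:ℝ) ≤ r)) (sq_nonneg s),
    mul_le_mul_of_nonneg_left hπ2 (sq_nonneg (1-r)), sq_nonneg s,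
    mul_le_mul_of_nonneg_right (by linarith : (1:ℝ)/2 ≤ r) (mul_nonneg (by positivity : (0:ℝ) ≤ π^2) (sq_nonneg s))]



lemma rpow_bound {r θ b : ℝ} (hr : 1/2 ≤ r) (hr1 : r < 1) (hθ0 : 0 ≤ θ) (hθ1 : θ ≤ 2*π)
    (hb0 : 0 < b) (hb2 : b ≤ 2) :
    ‖(1:ℂ) - circleMap 0 r θ‖ ^ (-b) ≤
      2*π^2 * ((1 - r + θ)^(-b) + (1 - r + (2*π - θ))^(-b)) := by
  have hπ := Real.pi_gt_three
  have hd0 : 0 ≤ min θ (2*π - θ) := le_min hθ0 (by linarith)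
  set d := min θ (2*π - θ) with hd
  have hc1 : (1:ℝ) ≤ Real.sqrt 2 * π := by
    nlinarith [Real.sq_sqrt (by norm_num : (0:ℝ) ≤ 2), Real.sqrt_nonneg 2]
  have ha : (0:ℝ) < (1 - r + d) / (Real.sqrt 2 * π) := by
    apply div_pos (by linarith) (by linarith)
  have h1 : ‖(1:ℂ) - circleMap 0 r θ‖ ^ (-b) ≤ ((1 - r + d) / (Real.sqrt 2 * π)) ^ (-b) :=
    Real.rpow_le_rpow_of_nonpos ha (geom_lb hr hr1 hθ0 hθ1) (by linarith)
  have h2 : ((1 - r + d) / (Real.sqrt 2 * π)) ^ (-b) =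
      (1 - r + d) ^ (-b) * (Real.sqrt 2 * π) ^ b := by
    rw [Real.div_rpow (by linarith) (by linarith), Real.rpow_neg (by linarith : (0:ℝ) ≤ Real.sqrt 2 * π),
      div_eq_mul_inv, inv_inv]
  have h3 : (Real.sqrt 2 * π) ^ b ≤ 2*π^2 := by
    calc (Real.sqrt 2 * π) ^ b ≤ (Real.sqrt 2 * π) ^ (2:ℝ) :=
          Real.rpow_le_rpow_of_exponent_le hc1 hb2
    _ = 2*π^2 := by
        rw [Real.rpow_two, mul_pow, Real.sq_sqrt (by norm_num : (0:ℝ) ≤ 2)]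
  have h4 : (1 - r + d) ^ (-b) ≤ (1 - r + θ)^(-b) + (1 - r + (2*π - θ))^(-b) := by
    rcases min_choice θ (2*π - θ) with h | h
    · rw [hd, h]
      exact le_add_of_nonneg_right (Real.rpow_nonneg (by linarith) _)
    · rw [hd, h]
      exact le_add_of_nonneg_left (Real.rpow_nonneg (by linarith) _)
  calc ‖(1:ℂ) - circleMap 0 r θ‖ ^ (-b) ≤ (1 - r + d) ^ (-b) * (Real.sqrt 2 * π) ^ b := by
        rw [← h2]; exact h1
  _ ≤ (1 - r + d) ^ (-b) * (2*π^2) :=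
      mul_le_mul_of_nonneg_left h3 (Real.rpow_nonneg (by linarith) _)
  _ ≤ ((1 - r + θ)^(-b) + (1 - r + (2*π - θ))^(-b)) * (2*π^2) :=
      mul_le_mul_of_nonneg_right h4 (by positivity)
  _ = 2*π^2 * ((1 - r + θ)^(-b) + (1 - r + (2*π - θ))^(-b)) := by ring

lemma integrable1 {b δ : ℝ} (hδ : 0 < δ) :
    IntervalIntegrable (fun θ => (δ + θ) ^ (-b)) MeasureTheory.volume 0 (2*π) := by
  apply ContinuousOn.intervalIntegrable
  apply ContinuousOn.rpow_const (by fun_prop)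
  intro x hx
  rw [Set.uIcc_of_le (by positivity)] at hx
  exact Or.inl (by have := hx.1; positivity)

lemma integrable2 {b δ : ℝ} (hδ : 0 < δ) :
    IntervalIntegrable (fun θ => (δ + (2*π - θ)) ^ (-b)) MeasureTheory.volume 0 (2*π) := by
  apply ContinuousOn.intervalIntegrable
  apply ContinuousOn.rpow_const (by fun_prop)
  intro x hx
  rw [Set.uIcc_of_le (by positivity)] at hx
  exact Or.inl (ne_of_gt (by linarith [hx.2]))

lemma int_bound {b δ : ℝ} (hb : 1 < b) (hδ : 0 < δ) :
    ∫ θ in (0:ℝ)..2*π, (δ + θ) ^ (-b) ≤ δ^(1-b)/(b-1) := by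
  have hπ := Real.pi_gt_three
  have h1 : (∫ θ in (0:ℝ)..2*π, (δ + θ) ^ (-b)) = ∫ x in δ..(δ+2*π), x ^ (-b) := by
    have := intervalIntegral.integral_comp_add_left (a := 0) (b := 2*π) (fun x => x ^ (-b)) δ
    simpa using this
  rw [h1, integral_rpow (Or.inr ⟨by intro h; nlinarith [h], by
      rw [Set.uIcc_of_le (by linarith)]
      rintro ⟨h1', h2'⟩; linarith⟩)]
  have h2 : ((δ+2*π) ^ (-b+1) - δ ^ (-b+1)) / (-b+1) =
      (δ ^ (-b+1) - (δ+2*π) ^ (-b+1)) / (b-1) := by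
    rw [div_eq_div_iff (by linarith) (by linarith)]; ring
  rw [h2, show (1:ℝ)-b = -b+1 by ring]
  rw [div_le_div_iff_of_pos_right (by linarith)]
  exact sub_le_self _ (Real.rpow_nonneg (by linarith) _)


lemma hasFPS (e : ℕ → ℂ) (E : ℂ → ℂ)
    (hsum : ∀ z : ℂ, ‖z‖ < 1 → HasSum (fun n => e n * z ^ n) (E z)) :
    HasFPowerSeriesOnBall E
      (fun n => ContinuousMultilinearMap.mkPiRing ℂ (Fin n) (e n)) 0 1 := by
  set p : FormalMultilinearSeries ℂ ℂ ℂ :=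
    fun n => ContinuousMultilinearMap.mkPiRing ℂ (Fin n) (e n) with hp
  refine ⟨?_, one_pos, ?_⟩
  · apply ENNReal.le_of_forall_nnreal_lt
    intro t ht
    have ht1 : (t:ℝ) < 1 := by exact_mod_cast ht
    have hs := (hsum ((t:ℝ):ℂ) (by simpa [Complex.norm_real, Real.norm_eq_abs, abs_of_nonneg t.coe_nonneg] using ht1)).summable
    apply FormalMultilinearSeries.le_radius_of_tendsto (l := 0)
    have h0 := hs.tendsto_atTop_zero.norm
    rw [norm_zero] at h0
    convert h0 using 2 with n
    rw [hp]
    simp [ContinuousMultilinearMap.norm_mkPiRing, norm_mul, norm_pow, Complex.norm_real,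
      abs_of_nonneg t.coe_nonneg]
  · intro y hy
    have hy1 : ‖y‖ < 1 := by
      simpa [enorm_eq_nnnorm, ENNReal.coe_lt_one_iff, ← NNReal.coe_lt_one,
        coe_nnnorm] using hy
    rw [zero_add]
    convert hsum y hy1 using 2 with n
    · rfl
    simp [hp, ContinuousMultilinearMap.mkPiRing_apply, smul_eq_mul]
    ring

lemma coeff_formula (e : ℕ → ℂ) (E : ℂ → ℂ)
    (hsum : ∀ z : ℂ, ‖z‖ < 1 → HasSum (fun n => e n * z ^ n) (E z))
    {r : NNReal} (hr0 : 0 < r) (hr1 : (r:ℝ) < 1) (n : ℕ) :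
    e n = (2 * ↑π * Complex.I)⁻¹ •
      ∮ z in C(0, (r:ℝ)), ((1:ℂ) / (z - 0)) ^ n • (z - 0)⁻¹ • E z := by
  have hp := hasFPS e E hsum
  have hd : DifferentiableOn ℂ E (Metric.closedBall 0 (r:ℝ)) := by
    apply hp.differentiableOn.mono
    intro z hz
    rw [Metric.mem_closedBall] at hz
    rw [EMetric.mem_ball, edist_dist, dist_zero_right]
    calc (ENNReal.ofReal ‖z‖) < ENNReal.ofReal 1 := by
          apply ENNReal.ofReal_lt_ofReal_iff_of_nonneg (norm_nonneg z) |>.mpr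
          calc ‖z‖ ≤ (r:ℝ) := by simpa [dist_zero_right] using hz
          _ < 1 := hr1
    _ = 1 := ENNReal.ofReal_one
  have h2 : HasFPowerSeriesOnBall E (cauchyPowerSeries E 0 r) 0 r :=
    hd.hasFPowerSeriesOnBall hr0
  have heq := hp.hasFPowerSeriesAt.eq_formalMultilinearSeries h2.hasFPowerSeriesAt
  have h3 : e n = (cauchyPowerSeries E 0 r n) (fun _ => 1) := by
    rw [← heq]
    simp [ContinuousMultilinearMap.mkPiRing_apply]
  rw [h3, cauchyPowerSeries_apply]


lemma byparts (E : ℂ → ℂ) {r : ℝ} (hr : 0 < r)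
    (hE : ∀ z ∈ Metric.sphere (0:ℂ) r, DifferentiableAt ℂ E z)
    (hcont : ContinuousOn (deriv E) (Metric.sphere (0:ℂ) r)) (n : ℕ) :
    (∮ z in C(0, r), z ^ (-(n:ℤ)) * deriv E z) =
      (n:ℂ) * ∮ z in C(0, r), z ^ (-(n:ℤ) - 1) * E z := by
  have hz0 : ∀ z ∈ Metric.sphere (0:ℂ) r, z ≠ 0 := by
    intro z hz h0
    rw [Metric.mem_sphere, dist_zero_right, h0, norm_zero] at hz
    exact hr.ne hz
  set g : ℂ → ℂ := fun z => z ^ (-(n:ℤ)) * deriv E z with hg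
  set h : ℂ → ℂ := fun z => (n:ℂ) * (z ^ (-(n:ℤ) - 1) * E z) with hh
  have hEcont : ContinuousOn E (Metric.sphere (0:ℂ) r) :=
    fun z hz => (hE z hz).continuousAt.continuousWithinAt
  have hgi : CircleIntegrable g 0 r := by
    apply ContinuousOn.circleIntegrable hr.le
    exact (continuousOn_id.zpow₀ _ (fun z hz => Or.inl (hz0 z hz))).mul hcont
  have hhi : CircleIntegrable h 0 r := by
    apply ContinuousOn.circleIntegrable hr.le
    exact continuousOn_const.mul
      ((continuousOn_id.zpow₀ _ (fun z hz => Or.inl (hz0 z hz))).mul hEcont)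
  have hzero : (∮ z in C(0, r), (g z - h z)) = 0 := by
    apply circleIntegral.integral_eq_zero_of_hasDerivWithinAt hr.le
      (f := fun z => z ^ (-(n:ℤ)) * E z)
    intro z hz
    have hd := (hasDerivAt_zpow (-(n:ℤ)) z (Or.inl (hz0 z hz))).mul (hE z hz).hasDerivAt
    have : g z - h z = ((-(n:ℤ)) : ℂ) * z ^ (-(n:ℤ) - 1) * E z + z ^ (-(n:ℤ)) * deriv E z := by
      rw [hg, hh]; push_cast; ring
    push_cast at this hd ⊢
    rw [this]
    exact hd.hasDerivWithinAt
  rw [circleIntegral.integral_sub hgi hhi, sub_eq_zero] at hzero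
  rw [hzero, hh, circleIntegral.integral_const_mul]

set_option maxHeartbeats 2000000 in
/-- Converting a three-term derivative bound on `E_z` into coefficient bounds,
with a constant independent of `n`, `A` and `B`. -/
theorem stmt_17 (ε M : ℝ) (hε : ε ∈ Set.Ioo (0 : ℝ) (1 / 2)) (hM : 0 ≤ M) :
    ∃ M' : ℝ, 0 < M' ∧
      ∀ (A B : ℝ), 0 ≤ A → 0 ≤ B →
        ∀ (e : ℕ → ℂ) (E : ℂ → ℂ),
          (∀ z : ℂ, ‖z‖ < 1 → HasSum (fun n => e n * z ^ n) (E z)) →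
          (∀ z : ℂ, ‖z‖ < 1 → ‖deriv E z‖ ≤
            M * (‖1 - z‖ ^ (ε - 3 / 2) + A * ‖1 - z‖ ^ (-(3 : ℝ) / 2) +
              B * ‖1 - z‖ ^ (-2 : ℝ))) →
          ∀ n : ℕ, 1 ≤ n →
            ‖e n‖ ≤ M' * M * ((n : ℝ) ^ (-(1 / 2) - ε) + A * (n : ℝ) ^ (-(1 : ℝ) / 2) + B) := by
  obtain ⟨hε0, hε12⟩ := hε
  have hπ := Real.pi_gt_three
  refine ⟨16 * π / (1/2 - ε), div_pos (by positivity) (by linarith), ?_⟩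
  intro A B hA hB e E hsum hderiv n hn
  have hn0 : (0:ℝ) < n := by exact_mod_cast hn
  set δ : ℝ := 1 / (2 * n) with hδdef
  have hδ0 : 0 < δ := by positivity
  have hδ12 : δ ≤ 1/2 := by
    rw [hδdef]
    rw [div_le_div_iff₀ (by positivity) (by norm_num)]
    have hn1 : (1:ℝ) ≤ n := by exact_mod_cast hn
    linarith
  set r : ℝ := 1 - δ with hrdef
  have hr12 : 1/2 ≤ r := by rw [hrdef]; linarith
  have hr1 : r < 1 := by rw [hrdef]; linarith
  have hr0 : 0 < r := by linarith
  -- power of r bound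
  have hrn2 : (r:ℝ) ^ (-(n:ℤ)) ≤ 2 := by
    have h1 : (1:ℝ)/2 ≤ r ^ n := by
      have := one_add_mul_le_pow (a := -δ) (by linarith) n
      have hnδ : (n:ℝ) * δ = 1/2 := by
        rw [hδdef, mul_one_div, div_eq_div_iff (by positivity) (by norm_num)]
        ring
      calc (1:ℝ)/2 = 1 + (n:ℝ) * (-δ) := by rw [mul_neg]; linarith
      _ ≤ (1 + -δ) ^ n := this
      _ = r ^ n := by rw [hrdef]; ring_nf
    rw [zpow_neg, zpow_natCast]
    calc (r ^ n)⁻¹ ≤ ((1:ℝ)/2)⁻¹ := by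
          apply inv_anti₀ (by norm_num) h1
    _ = 2 := by norm_num
  have hrn0 : (0:ℝ) ≤ (r:ℝ) ^ (-(n:ℤ)) := by positivity
  -- analytic facts
  have hp := hasFPS e E hsum
  have hmem : ∀ z : ℂ, ‖z‖ < 1 → z ∈ Metric.eball (0:ℂ) 1 := by
    intro z hz
    rw [Metric.mem_eball, edist_dist, dist_zero_right, ← ENNReal.ofReal_one]
    exact ENNReal.ofReal_lt_ofReal_iff_of_nonneg (norm_nonneg z) |>.mpr hz
  have hsphere : ∀ z ∈ Metric.sphere (0:ℂ) r, ‖z‖ < 1 := by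
    intro z hz
    rw [Metric.mem_sphere, dist_zero_right] at hz
    rw [hz]; exact hr1
  have hEdiff : ∀ z ∈ Metric.sphere (0:ℂ) r, DifferentiableAt ℂ E z := fun z hz =>
    hp.differentiableOn.differentiableAt
      (EMetric.isOpen_ball.mem_nhds (hmem z (hsphere z hz)))
  have hcont : ContinuousOn (deriv E) (Metric.sphere (0:ℂ) r) := by
    apply (hp.analyticOnNhd.deriv.continuousOn).mono
    intro z hz
    exact hmem z (hsphere z hz)
  -- coefficient formula
  have key0 := coeff_formula e E hsum (r := ⟨r, hr0.le⟩)
    (by exact_mod_cast hr0) (by exact_mod_cast hr1) n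
  change e n = (2 * ↑π * Complex.I)⁻¹ • ∮ z in C(0, r), ((1:ℂ) / (z - 0)) ^ n • (z - 0)⁻¹ • E z at key0
  have key : e n = (2 * ↑π * Complex.I)⁻¹ * ∮ z in C(0, r), z ^ (-(n:ℤ) - 1) * E z := by
    rw [key0, smul_eq_mul]
    congr 1
    apply circleIntegral.integral_congr hr0.le
    intro z hz
    have hz0 : z ≠ 0 := by
      intro h0
      rw [Metric.mem_sphere, dist_zero_right, h0, norm_zero] at hz
      exact hr0.ne hz
    simp only [sub_zero, smul_eq_mul, one_div, inv_pow]
    have h1 : (z ^ n)⁻¹ = z ^ (-(n:ℤ)) := by rw [← zpow_natCast z n, ← zpow_neg]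
    rw [h1, ← mul_assoc, show z⁻¹ = z ^ (-1:ℤ) from (zpow_neg_one z).symm,
      ← zpow_add₀ hz0, show -(n:ℤ) + -1 = -(n:ℤ) - 1 from by ring]
  have hbp := byparts E hr0 hEdiff hcont n
  have hne : (n:ℂ) * e n =
      (2 * ↑π * Complex.I)⁻¹ * ∮ z in C(0, r), z ^ (-(n:ℤ)) * deriv E z := by
    rw [hbp, key]; ring
  -- the integrand bound
  set b1 : ℝ := 3/2 - ε with hb1
  set C0 : ℝ := r * (r:ℝ) ^ (-(n:ℤ)) * M * (2 * π^2) with hC0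
  have hC00 : 0 ≤ C0 := by positivity
  set F : ℝ → ℝ := fun θ =>
    ((δ + θ) ^ (-b1) + (δ + (2*π - θ)) ^ (-b1))
      + A * ((δ + θ) ^ (-(3/2:ℝ)) + (δ + (2*π - θ)) ^ (-(3/2:ℝ)))
      + B * ((δ + θ) ^ (-(2:ℝ)) + (δ + (2*π - θ)) ^ (-(2:ℝ))) with hF
  -- integrability
  have i1 := integrable1 (b := b1) hδ0
  have i1' := integrable2 (b := b1) hδ0
  have i2 := integrable1 (b := (3/2:ℝ)) hδ0
  have i2' := integrable2 (b := (3/2:ℝ)) hδ0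
  have i3 := integrable1 (b := (2:ℝ)) hδ0
  have i3' := integrable2 (b := (2:ℝ)) hδ0
  have hFint : IntervalIntegrable F MeasureTheory.volume 0 (2*π) :=
    (((i1.add i1').add ((i2.add i2').const_mul A)).add ((i3.add i3').const_mul B))
  have hGint : IntervalIntegrable (fun θ => C0 * F θ) MeasureTheory.volume 0 (2*π) :=
    hFint.const_mul C0
  -- norm bound on the circle integral
  have hbound : ‖∮ z in C(0, r), z ^ (-(n:ℤ)) * deriv E z‖ ≤
      ∫ θ in (0:ℝ)..2*π, C0 * F θ := by
    have habs : ‖∫ θ in (0:ℝ)..2*π, deriv (circleMap 0 r) θ •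
        (circleMap 0 r θ ^ (-(n:ℤ)) * deriv E (circleMap 0 r θ))‖ ≤
        |∫ θ in (0:ℝ)..2*π, C0 * F θ| := by
      apply intervalIntegral.norm_integral_le_abs_of_norm_le ?_ hGint
      rw [Set.uIoc_of_le (by positivity)]
      refine (MeasureTheory.ae_restrict_mem measurableSet_Ioc).mono (fun θ hθ => ?_)
      obtain ⟨hθ0, hθ1⟩ := hθ
      set w : ℂ := circleMap 0 r θ with hw
      have hwn : ‖w‖ = r := by
        rw [hw, norm_circleMap_zero, abs_of_nonneg hr0.le]
      have hw1 : ‖w‖ < 1 := by rw [hwn]; exact hr1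
      have hnorm1 : ‖deriv (circleMap 0 r) θ • (w ^ (-(n:ℤ)) * deriv E w)‖ =
          r * ((r:ℝ) ^ (-(n:ℤ)) * ‖deriv E w‖) := by
        rw [smul_eq_mul, deriv_circleMap, norm_mul, norm_mul, norm_mul, Complex.norm_I,
          mul_one, norm_zpow, hwn]
        all_goals ring
      rw [hnorm1]
      have hEb := hderiv w hw1
      have hrb1 : ‖1 - w‖ ^ (ε - 3/2) ≤ 2*π^2 * ((δ + θ)^(-b1) + (δ + (2*π - θ))^(-b1)) := by
        have := rpow_bound (b := b1) hr12 hr1 hθ0.le hθ1 (by rw [hb1]; linarith) (by rw [hb1]; linarith)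
        rw [show ε - 3/2 = -b1 by rw [hb1]; ring]
        simpa [hrdef] using this
      have hrb2 : ‖1 - w‖ ^ (-(3:ℝ)/2) ≤ 2*π^2 * ((δ + θ)^(-(3/2:ℝ)) + (δ + (2*π - θ))^(-(3/2:ℝ))) := by
        have := rpow_bound (b := (3/2:ℝ)) hr12 hr1 hθ0.le hθ1 (by norm_num) (by norm_num)
        rw [show -(3:ℝ)/2 = -(3/2:ℝ) by ring]
        simpa [hrdef] using this
      have hrb3 : ‖1 - w‖ ^ (-2:ℝ) ≤ 2*π^2 * ((δ + θ)^(-(2:ℝ)) + (δ + (2*π - θ))^(-(2:ℝ))) := by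
        have := rpow_bound (b := (2:ℝ)) hr12 hr1 hθ0.le hθ1 (by norm_num) (by norm_num)
        simpa [hrdef] using this
      calc r * ((r:ℝ) ^ (-(n:ℤ)) * ‖deriv E w‖)
          ≤ r * ((r:ℝ) ^ (-(n:ℤ)) * (M * (‖1 - w‖ ^ (ε - 3/2) + A * ‖1 - w‖ ^ (-(3:ℝ)/2)
              + B * ‖1 - w‖ ^ (-2:ℝ)))) := by
            apply mul_le_mul_of_nonneg_left (mul_le_mul_of_nonneg_left hEb hrn0) hr0.le
      _ ≤ r * ((r:ℝ) ^ (-(n:ℤ)) * (M * (2*π^2 * F θ))) := by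
            apply mul_le_mul_of_nonneg_left (mul_le_mul_of_nonneg_left
              (mul_le_mul_of_nonneg_left ?_ hM) hrn0) hr0.le
            rw [hF]
            calc ‖1 - w‖ ^ (ε - 3/2) + A * ‖1 - w‖ ^ (-(3:ℝ)/2) + B * ‖1 - w‖ ^ (-2:ℝ)
                ≤ 2*π^2 * ((δ + θ)^(-b1) + (δ + (2*π - θ))^(-b1))
                  + A * (2*π^2 * ((δ + θ)^(-(3/2:ℝ)) + (δ + (2*π - θ))^(-(3/2:ℝ))))
                  + B * (2*π^2 * ((δ + θ)^(-(2:ℝ)) + (δ + (2*π - θ))^(-(2:ℝ)))) := by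
                  exact add_le_add (add_le_add hrb1 (mul_le_mul_of_nonneg_left hrb2 hA))
                    (mul_le_mul_of_nonneg_left hrb3 hB)
            _ = 2*π^2 * (((δ + θ)^(-b1) + (δ + (2*π - θ))^(-b1))
                  + A * ((δ + θ)^(-(3/2:ℝ)) + (δ + (2*π - θ))^(-(3/2:ℝ)))
                  + B * ((δ + θ)^(-(2:ℝ)) + (δ + (2*π - θ))^(-(2:ℝ)))) := by ring
        _ = C0 * F θ := by rw [hC0]; ring
    have hF0 : ∀ θ ∈ Set.Icc (0:ℝ) (2*π), 0 ≤ C0 * F θ := by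
      intro θ hθ
      apply mul_nonneg hC00
      rw [hF]
      have n1 : (0:ℝ) ≤ (δ + θ) ^ (-b1) := Real.rpow_nonneg (by nlinarith [hθ.1]) _
      have n2 : (0:ℝ) ≤ (δ + (2*π - θ)) ^ (-b1) := Real.rpow_nonneg (by nlinarith [hθ.2]) _
      have n3 : (0:ℝ) ≤ (δ + θ) ^ (-(3/2:ℝ)) := Real.rpow_nonneg (by nlinarith [hθ.1]) _
      have n4 : (0:ℝ) ≤ (δ + (2*π - θ)) ^ (-(3/2:ℝ)) := Real.rpow_nonneg (by nlinarith [hθ.2]) _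
      have n5 : (0:ℝ) ≤ (δ + θ) ^ (-(2:ℝ)) := Real.rpow_nonneg (by nlinarith [hθ.1]) _
      have n6 : (0:ℝ) ≤ (δ + (2*π - θ)) ^ (-(2:ℝ)) := Real.rpow_nonneg (by nlinarith [hθ.2]) _
      have := mul_nonneg hA (add_nonneg n3 n4)
      have := mul_nonneg hB (add_nonneg n5 n6)
      linarith
    calc ‖∮ z in C(0, r), z ^ (-(n:ℤ)) * deriv E z‖
        = ‖∫ θ in (0:ℝ)..2*π, deriv (circleMap 0 r) θ •
            (circleMap 0 r θ ^ (-(n:ℤ)) * deriv E (circleMap 0 r θ))‖ := rfl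
    _ ≤ |∫ θ in (0:ℝ)..2*π, C0 * F θ| := habs
    _ = ∫ θ in (0:ℝ)..2*π, C0 * F θ := by
        rw [abs_of_nonneg]
        apply intervalIntegral.integral_nonneg (by positivity)
        exact hF0

  -- reflection identity
  have hrefl : ∀ b : ℝ, (∫ θ in (0:ℝ)..2*π, (δ + (2*π - θ)) ^ (-b)) =
      ∫ θ in (0:ℝ)..2*π, (δ + θ) ^ (-b) := by
    intro b
    have h := intervalIntegral.integral_comp_sub_left (a := (0:ℝ)) (b := 2*π)
      (fun x => (δ + x) ^ (-b)) (2*π)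
    simpa using h
  -- split the integral
  have hIval : (∫ θ in (0:ℝ)..2*π, C0 * F θ) =
      C0 * ((∫ θ in (0:ℝ)..2*π, (δ+θ)^(-b1)) * 2
        + A * ((∫ θ in (0:ℝ)..2*π, (δ+θ)^(-(3/2:ℝ))) * 2)
        + B * ((∫ θ in (0:ℝ)..2*π, (δ+θ)^(-(2:ℝ))) * 2)) := by
    rw [intervalIntegral.integral_const_mul]
    congr 1
    simp only [hF]
    rw [intervalIntegral.integral_add ((i1.add i1').add ((i2.add i2').const_mul A))
        ((i3.add i3').const_mul B),
      intervalIntegral.integral_add (i1.add i1') ((i2.add i2').const_mul A),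
      intervalIntegral.integral_add i1 i1',
      intervalIntegral.integral_const_mul, intervalIntegral.integral_const_mul,
      intervalIntegral.integral_add i2 i2', intervalIntegral.integral_add i3 i3',
      hrefl, hrefl, hrefl]
    ring
  -- numeric bounds on the integrals
  have hu0 : (0:ℝ) < 1/2 - ε := by linarith
  have hui : (0:ℝ) < ((1:ℝ)/2 - ε)⁻¹ := by positivity
  have hui2 : (2:ℝ) ≤ ((1:ℝ)/2 - ε)⁻¹ := by
    rw [le_inv_comm₀ (by norm_num) hu0]
    linarith
  have hdb : ∀ b : ℝ, 1 < b → b ≤ 2 → δ ^ (1-b) ≤ 2 * (n:ℝ) ^ (b-1) := by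
    intro b hb1' hb2'
    have h2n : (0:ℝ) < 2*(n:ℝ) := by positivity
    have hδinv : δ = (2*(n:ℝ))⁻¹ := by rw [hδdef, one_div]
    have h1 : δ ^ (1-b) = (2*(n:ℝ)) ^ (b-1) := by
      rw [hδinv, Real.inv_rpow h2n.le, ← Real.rpow_neg h2n.le]
      congr 1
      ring
    have h2 : (2*(n:ℝ)) ^ (b-1) = 2 ^ (b-1) * (n:ℝ)^(b-1) :=
      Real.mul_rpow (by norm_num) hn0.le
    have h3 : (2:ℝ) ^ (b-1) ≤ 2 := by
      calc (2:ℝ) ^ (b-1) ≤ 2 ^ (1:ℝ) :=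
            Real.rpow_le_rpow_of_exponent_le one_le_two (by linarith)
      _ = 2 := Real.rpow_one 2
    rw [h1, h2]
    exact mul_le_mul_of_nonneg_right h3 (Real.rpow_nonneg hn0.le _)
  have hb1a : (1:ℝ) < b1 := by rw [hb1]; linarith
  have hb1b : b1 ≤ 2 := by rw [hb1]; linarith
  have hX0 : (0:ℝ) ≤ (n:ℝ)^((1:ℝ)/2-ε) := Real.rpow_nonneg hn0.le _
  have hY0 : (0:ℝ) ≤ (n:ℝ)^((1:ℝ)/2) := Real.rpow_nonneg hn0.le _
  have hI1 : (∫ θ in (0:ℝ)..2*π, (δ+θ)^(-b1)) ≤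
      2*(n:ℝ)^((1:ℝ)/2-ε)*((1:ℝ)/2-ε)⁻¹ := by
    have h := int_bound hb1a hδ0
    have h2 := hdb b1 hb1a hb1b
    rw [show b1 - 1 = 1/2 - ε by rw [hb1]; ring] at h h2
    rw [div_eq_mul_inv] at h
    calc (∫ θ in (0:ℝ)..2*π, (δ+θ)^(-b1)) ≤ δ^(1-b1) * ((1:ℝ)/2-ε)⁻¹ := h
    _ ≤ 2*(n:ℝ)^((1:ℝ)/2-ε)*((1:ℝ)/2-ε)⁻¹ :=
        mul_le_mul_of_nonneg_right h2 hui.le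
  have hI2 : (∫ θ in (0:ℝ)..2*π, (δ+θ)^(-(3/2:ℝ))) ≤ 4*(n:ℝ)^((1:ℝ)/2) := by
    have h := int_bound (b := (3/2:ℝ)) (by norm_num) hδ0
    have h2 := hdb (3/2:ℝ) (by norm_num) (by norm_num)
    rw [show (3:ℝ)/2 - 1 = 1/2 by norm_num] at h h2
    calc (∫ θ in (0:ℝ)..2*π, (δ+θ)^(-(3/2:ℝ))) ≤ δ^((1:ℝ)-3/2)/(1/2) := h
    _ = δ^((1:ℝ)-3/2) * 2 := by ring
    _ ≤ (2*(n:ℝ)^((1:ℝ)/2)) * 2 := by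
        apply mul_le_mul_of_nonneg_right _ (by norm_num)
        exact h2
    _ = 4*(n:ℝ)^((1:ℝ)/2) := by ring
  have hI3 : (∫ θ in (0:ℝ)..2*π, (δ+θ)^(-(2:ℝ))) ≤ 2*(n:ℝ) := by
    have h := int_bound (b := (2:ℝ)) (by norm_num) hδ0
    have h2 := hdb (2:ℝ) (by norm_num) (by norm_num)
    rw [show (2:ℝ) - 1 = 1 by norm_num] at h h2
    rw [Real.rpow_one] at h2
    calc (∫ θ in (0:ℝ)..2*π, (δ+θ)^(-(2:ℝ))) ≤ δ^((1:ℝ)-2)/1 := h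
    _ = δ^((1:ℝ)-2) := by ring
    _ ≤ 2*(n:ℝ) := h2
  -- nonnegativity of the integrals
  have hJ1 : (0:ℝ) ≤ ∫ θ in (0:ℝ)..2*π, (δ+θ)^(-b1) :=
    intervalIntegral.integral_nonneg (by positivity)
      (fun θ hθ => Real.rpow_nonneg (by nlinarith [hθ.1]) _)
  have hJ2 : (0:ℝ) ≤ ∫ θ in (0:ℝ)..2*π, (δ+θ)^(-(3/2:ℝ)) :=
    intervalIntegral.integral_nonneg (by positivity)
      (fun θ hθ => Real.rpow_nonneg (by nlinarith [hθ.1]) _)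
  have hJ3 : (0:ℝ) ≤ ∫ θ in (0:ℝ)..2*π, (δ+θ)^(-(2:ℝ)) :=
    intervalIntegral.integral_nonneg (by positivity)
      (fun θ hθ => Real.rpow_nonneg (by nlinarith [hθ.1]) _)
  -- C0 bound
  have hC0le : C0 ≤ 4*π^2*M := by
    rw [hC0]
    calc r * r^(-(n:ℤ)) * M * (2*π^2) ≤ 1 * 2 * M * (2*π^2) := by
          apply mul_le_mul_of_nonneg_right _ (by positivity)
          apply mul_le_mul_of_nonneg_right _ hM
          exact mul_le_mul (by linarith) hrn2 hrn0 (by norm_num)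
    _ = 4*π^2*M := by ring
  -- assemble
  have hnorm2 : ‖(2*(π:ℂ)*Complex.I)⁻¹‖ = (2*π)⁻¹ := by
    rw [norm_inv, norm_mul, norm_mul, Complex.norm_I, mul_one, Complex.norm_real,
      Real.norm_eq_abs, abs_of_pos Real.pi_pos]
    norm_num
  have hfinal1 : (n:ℝ) * ‖e n‖ ≤ (2*π)⁻¹ * ∫ θ in (0:ℝ)..2*π, C0 * F θ := by
    have hh : ‖(n:ℂ) * e n‖ = (n:ℝ) * ‖e n‖ := by
      rw [norm_mul, Complex.norm_natCast]
    rw [← hh, hne, norm_mul, hnorm2]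
    exact mul_le_mul_of_nonneg_left hbound (by positivity)
  have hsum1 : (∫ θ in (0:ℝ)..2*π, C0 * F θ) ≤
      4*π^2*M * ((2*(n:ℝ)^((1:ℝ)/2-ε)*((1:ℝ)/2-ε)⁻¹) * 2
        + A * ((4*(n:ℝ)^((1:ℝ)/2)) * 2) + B * ((2*(n:ℝ)) * 2)) := by
    rw [hIval]
    have hbr : (0:ℝ) ≤ (∫ θ in (0:ℝ)..2*π, (δ+θ)^(-b1)) * 2
        + A * ((∫ θ in (0:ℝ)..2*π, (δ+θ)^(-(3/2:ℝ))) * 2)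
        + B * ((∫ θ in (0:ℝ)..2*π, (δ+θ)^(-(2:ℝ))) * 2) := by
      have := mul_nonneg hA (by linarith : (0:ℝ) ≤ (∫ θ in (0:ℝ)..2*π, (δ+θ)^(-(3/2:ℝ))) * 2)
      have := mul_nonneg hB (by linarith : (0:ℝ) ≤ (∫ θ in (0:ℝ)..2*π, (δ+θ)^(-(2:ℝ))) * 2)
      linarith
    calc C0 * ((∫ θ in (0:ℝ)..2*π, (δ+θ)^(-b1)) * 2
        + A * ((∫ θ in (0:ℝ)..2*π, (δ+θ)^(-(3/2:ℝ))) * 2)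
        + B * ((∫ θ in (0:ℝ)..2*π, (δ+θ)^(-(2:ℝ))) * 2))
        ≤ (4*π^2*M) * ((∫ θ in (0:ℝ)..2*π, (δ+θ)^(-b1)) * 2
          + A * ((∫ θ in (0:ℝ)..2*π, (δ+θ)^(-(3/2:ℝ))) * 2)
          + B * ((∫ θ in (0:ℝ)..2*π, (δ+θ)^(-(2:ℝ))) * 2)) :=
          mul_le_mul_of_nonneg_right hC0le hbr
    _ ≤ 4*π^2*M * ((2*(n:ℝ)^((1:ℝ)/2-ε)*((1:ℝ)/2-ε)⁻¹) * 2
          + A * ((4*(n:ℝ)^((1:ℝ)/2)) * 2) + B * ((2*(n:ℝ)) * 2)) := by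
        apply mul_le_mul_of_nonneg_left _ (by positivity)
        have c1 := mul_le_mul_of_nonneg_right hI1 (by norm_num : (0:ℝ) ≤ 2)
        have c2 := mul_le_mul_of_nonneg_left
          (mul_le_mul_of_nonneg_right hI2 (by norm_num : (0:ℝ) ≤ 2)) hA
        have c3 := mul_le_mul_of_nonneg_left
          (mul_le_mul_of_nonneg_right hI3 (by norm_num : (0:ℝ) ≤ 2)) hB
        linarith
  -- final comparison
  have e1 : (n:ℝ)^(-(1/2) - ε) * (n:ℝ) = (n:ℝ)^((1:ℝ)/2-ε) := by
    rw [show (1:ℝ)/2 - ε = (-(1/2) - ε) + 1 by ring, Real.rpow_add_one hn0.ne']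
  have e2 : (n:ℝ)^(-(1:ℝ)/2) * (n:ℝ) = (n:ℝ)^((1:ℝ)/2) := by
    rw [show (1:ℝ)/2 = (-(1:ℝ)/2) + 1 by ring, Real.rpow_add_one hn0.ne']
  rw [← mul_le_mul_iff_of_pos_left hn0]
  have hrhs : (n:ℝ) * (16 * π / (1/2 - ε) * M *
      ((n:ℝ)^(-(1/2) - ε) + A * (n:ℝ)^(-(1:ℝ)/2) + B)) =
      16 * π * ((1:ℝ)/2 - ε)⁻¹ * M *
        ((n:ℝ)^((1:ℝ)/2-ε) + A * (n:ℝ)^((1:ℝ)/2) + B * (n:ℝ)) := by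
    rw [div_eq_mul_inv]
    linear_combination (16 * π * ((1:ℝ)/2 - ε)⁻¹ * M) * e1
      + (16 * π * ((1:ℝ)/2 - ε)⁻¹ * M * A) * e2
  rw [hrhs]
  have hmid : (2*π)⁻¹ * (4*π^2*M * ((2*(n:ℝ)^((1:ℝ)/2-ε)*((1:ℝ)/2-ε)⁻¹) * 2
      + A * ((4*(n:ℝ)^((1:ℝ)/2)) * 2) + B * ((2*(n:ℝ)) * 2))) =
      2*π*M * (4*(n:ℝ)^((1:ℝ)/2-ε)*((1:ℝ)/2-ε)⁻¹ + A * (8*(n:ℝ)^((1:ℝ)/2))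
        + B * (4*(n:ℝ))) := by
    field_simp
    ring
  calc (n:ℝ) * ‖e n‖ ≤ (2*π)⁻¹ * ∫ θ in (0:ℝ)..2*π, C0 * F θ := hfinal1
  _ ≤ (2*π)⁻¹ * (4*π^2*M * ((2*(n:ℝ)^((1:ℝ)/2-ε)*((1:ℝ)/2-ε)⁻¹) * 2
      + A * ((4*(n:ℝ)^((1:ℝ)/2)) * 2) + B * ((2*(n:ℝ)) * 2))) :=
      mul_le_mul_of_nonneg_left hsum1 (by positivity)
  _ = 2*π*M * (4*(n:ℝ)^((1:ℝ)/2-ε)*((1:ℝ)/2-ε)⁻¹ + A * (8*(n:ℝ)^((1:ℝ)/2))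
      + B * (4*(n:ℝ))) := hmid
  _ ≤ 16 * π * ((1:ℝ)/2 - ε)⁻¹ * M *
      ((n:ℝ)^((1:ℝ)/2-ε) + A * (n:ℝ)^((1:ℝ)/2) + B * (n:ℝ)) := by
    have p1 : (0:ℝ) ≤ π * M * ((n:ℝ)^((1:ℝ)/2-ε)) * ((1:ℝ)/2-ε)⁻¹ := by
      apply mul_nonneg (mul_nonneg (mul_nonneg Real.pi_pos.le hM) hX0) hui.le
    have p2 : (0:ℝ) ≤ π * M * A * ((n:ℝ)^((1:ℝ)/2)) * (((1:ℝ)/2-ε)⁻¹ - 1) := by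
      apply mul_nonneg (mul_nonneg (mul_nonneg (mul_nonneg Real.pi_pos.le hM) hA) hY0)
      linarith
    have p3 : (0:ℝ) ≤ π * M * B * (n:ℝ) * (2*((1:ℝ)/2-ε)⁻¹ - 1) := by
      apply mul_nonneg (mul_nonneg (mul_nonneg (mul_nonneg Real.pi_pos.le hM) hB) hn0.le)
      linarith
    nlinarith [p1, p2, p3]
end
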